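/- arXiv:1111.2943 — 6 statements merged into one kernel-verified Lean document; each statement's English description precedes it below -/
import Mathlib

section
/- Let C be a crystal framework in ℝ^d, let ω ∈ 𝕋^d, let u : V → ℂ^d, and let ũ(κ,k) = ω^k u(κ) for (κ,k) ∈ V × ℤ^d. For α > 0 define the wave motion P_α(κ,k)(t) = q(κ,k) + e^{iαt} ω^k u(κ) ∈ ℂ^d (points of ℝ^d regarded as points of ℂ^d) and, for e ∈ E and m ∈ ℤ^d, the bond-length change D_{e,m,α}(t) = ‖P_α(κ(e),k(e)+m)(t) − P_α(τ(e),l(e)+m)(t)‖ − ‖P_α(κ(e),k(e)+m)(0) − P_α(τ(e),l(e)+m)(0)‖, where ‖·‖ is the Hermitian norm on ℂ^d. Then the following are equivalent: (i) ũ is a (complex) infinitesimal flex of C; (ii) the supremum over e ∈ E, m ∈ ℤ^d and t ∈ ℝ of |D_{e,m,α}(t)| tends to 0 as α → 0+. -/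
open scoped BigOperators

/-- A crystal framework in ℝ^d: a vertex motif `V`, an edge motif `E`, motif vertex
positions `p`, `d` linearly independent period vectors `a`, and for each motif edge
endpoints `(κ e, kvec e)` and `(τ e, lvec e)` in `V × ℤ^d`. -/
structure CrystalFramework (d : ℕ) (V E : Type) [Fintype V] [Fintype E] where
  p : V → EuclideanSpace ℝ (Fin d)
  a : Fin d → EuclideanSpace ℝ (Fin d)
  indep : LinearIndependent ℝ a
  κ : E → V
  τ : E → V
  kvec : E → Fin d → ℤ
  lvec : E → Fin d → ℤ
  reflexive : ∀ e, κ e = τ e → kvec e = 0 ∧ lvec e ≠ 0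
  edge_ne : ∀ e, p (κ e) + ∑ i, (kvec e i : ℝ) • a i ≠ p (τ e) + ∑ i, (lvec e i : ℝ) • a i
  inj : Function.Injective fun x : V × (Fin d → ℤ) => p x.1 + ∑ i, (x.2 i : ℝ) • a i

namespace CrystalFramework

variable {d : ℕ} {V E : Type} [Fintype V] [Fintype E]

/-- The homomorphism `L : ℤ^d → ℝ^d` determined by the period vectors. -/
noncomputable def L (C : CrystalFramework d V E) (k : Fin d → ℤ) : EuclideanSpace ℝ (Fin d) :=
  ∑ i, (k i : ℝ) • C.a i

/-- The framework vertices `q(κ, k) = p(κ) + L(k)`. -/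
noncomputable def q (C : CrystalFramework d V E) (κ₀ : V) (k : Fin d → ℤ) :
    EuclideanSpace ℝ (Fin d) :=
  C.p κ₀ + C.L k

/-- The edge vector `v_e`. -/
noncomputable def edgeVec (C : CrystalFramework d V E) (e : E) : EuclideanSpace ℝ (Fin d) :=
  C.q (C.κ e) (C.kvec e) - C.q (C.τ e) (C.lvec e)

/-- A complex infinitesimal flex of the crystal framework. -/
def IsFlex (C : CrystalFramework d V E)
    (u : V × (Fin d → ℤ) → EuclideanSpace ℂ (Fin d)) : Prop :=
  ∀ (e : E) (m : Fin d → ℤ),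
    ∑ σ, (C.edgeVec e σ : ℂ) *
      (u (C.κ e, C.kvec e + m) σ - u (C.τ e, C.lvec e + m) σ) = 0

/-- `z^k` for `z ∈ ℂ^d` and a multi-index `k ∈ ℤ^d`. -/
noncomputable def zpow (z : Fin d → ℂ) (k : Fin d → ℤ) : ℂ := ∏ i, z i ^ k i

/-- Membership in the `d`-torus `𝕋^d`. -/
def OnTorus (z : Fin d → ℂ) : Prop := ∀ i, ‖z i‖ = 1

/-- The symbol (matrix-valued) function `Φ_C(z)` of a crystal framework. -/
noncomputable def Phi [DecidableEq V] (C : CrystalFramework d V E) (z : Fin d → ℂ) :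
    Matrix E (V × Fin d) ℂ := fun e col =>
  if C.κ e = C.τ e then
    (if col.1 = C.κ e then
      (C.edgeVec e col.2 : ℂ) * (1 - zpow (fun i => (starRingEnd ℂ) (z i)) (C.lvec e)) else 0)
  else
    (if col.1 = C.κ e then
      (C.edgeVec e col.2 : ℂ) * zpow (fun i => (starRingEnd ℂ) (z i)) (C.kvec e) else 0) +
    (if col.1 = C.τ e then
      -(C.edgeVec e col.2 : ℂ) * zpow (fun i => (starRingEnd ℂ) (z i)) (C.lvec e) else 0)

end CrystalFramework

section AuxWave

private lemma aux_norm_sq {n : ℕ} (v w : EuclideanSpace ℂ (Fin n)) (z : ℂ)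
    (hz : ‖z‖ = 1) :
    ‖v + z • w‖ ^ 2 = ‖v‖ ^ 2 + ‖w‖ ^ 2 + 2 * (z * (inner ℂ v w : ℂ)).re := by
  have h := @norm_add_sq ℂ _ _ _ _ v (z • w)
  rw [inner_smul_right] at h
  have hn : ‖z • w‖ = ‖w‖ := by
    rw [norm_smul]; simp [hz]
  rw [h, hn]
  simp [RCLike.re_to_complex]
  ring

private lemma aux_inner_zero_iff {n : ℕ} (v w : EuclideanSpace ℂ (Fin n)) :
    (inner ℂ v w : ℂ) = 0 ↔ ∀ z : ℂ, ‖z‖ = 1 → ‖v + z • w‖ = ‖v + w‖ := by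
  constructor
  · intro h z hz
    have h1 : ‖v + z • w‖ ^ 2 = ‖v + w‖ ^ 2 := by
      have e1 := aux_norm_sq v w z hz
      have e2 := aux_norm_sq v w 1 (by simp)
      rw [one_smul] at e2
      rw [e1, e2, h]; simp
    nlinarith [norm_nonneg (v + z • w), norm_nonneg (v + w)]
  · intro h
    have key : ∀ z : ℂ, ‖z‖ = 1 →
        (z * (inner ℂ v w : ℂ)).re = ((inner ℂ v w : ℂ)).re := by
      intro z hz
      have e1 := aux_norm_sq v w z hz
      have e2 := aux_norm_sq v w 1 (by simp)
      rw [one_smul] at e2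
      rw [h z hz, e2] at e1
      simpa using e1.symm
    have hi := key Complex.I (by simp)
    have hm := key (-1) (by simp)
    set c : ℂ := inner ℂ v w with hc
    have h1 : (Complex.I * c).re = c.re := hi
    have h2 : ((-1 : ℂ) * c).re = c.re := hm
    simp [Complex.mul_re] at h1 h2
    apply Complex.ext <;> simp <;> linarith

end AuxWave

open CrystalFramework in
/-- a phase-periodic velocity field is an infinitesimal flex iff the
corresponding harmonic wave motions have uniformly vanishing bond-length changes in the
long-wavelength limit `α → 0+`. -/
theorem waveFlex_iff_bondLength_changes_vanish
    {d : ℕ} {V E : Type} [Fintype V] [Fintype E]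
    (hd : 0 < d) (C : CrystalFramework d V E)
    (ω : Fin d → ℂ) (hω : OnTorus ω)
    (u : V → EuclideanSpace ℂ (Fin d))
    (ut : V × (Fin d → ℤ) → EuclideanSpace ℂ (Fin d))
    (hut : ∀ x, ut x = zpow ω x.2 • u x.1)
    (P : ℝ → V × (Fin d → ℤ) → ℝ → EuclideanSpace ℂ (Fin d))
    (hP : ∀ (α : ℝ) (x : V × (Fin d → ℤ)) (t : ℝ),
      P α x t = (WithLp.equiv 2 (Fin d → ℂ)).symm (fun σ => ((C.q x.1 x.2 σ : ℝ) : ℂ)) +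
        Complex.exp (Complex.I * (α : ℂ) * (t : ℂ)) • (zpow ω x.2 • u x.1))
    (D : E → (Fin d → ℤ) → ℝ → ℝ → ℝ)
    (hD : ∀ (e : E) (m : Fin d → ℤ) (α t : ℝ),
      D e m α t =
        ‖P α (C.κ e, C.kvec e + m) t - P α (C.τ e, C.lvec e + m) t‖ -
        ‖P α (C.κ e, C.kvec e + m) 0 - P α (C.τ e, C.lvec e + m) 0‖) :
    C.IsFlex ut ↔
      ∀ ε > (0 : ℝ), ∃ α₀ > (0 : ℝ), ∀ α : ℝ, 0 < α → α < α₀ →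
        ∀ (e : E) (m : Fin d → ℤ) (t : ℝ), |D e m α t| < ε := by
    classical
  set F : E → EuclideanSpace ℂ (Fin d) := fun e =>
    (WithLp.equiv 2 (Fin d → ℂ)).symm (fun σ => ((C.edgeVec e σ : ℝ) : ℂ)) with hFdef
  set w : E → (Fin d → ℤ) → EuclideanSpace ℂ (Fin d) := fun e m =>
    ut (C.κ e, C.kvec e + m) - ut (C.τ e, C.lvec e + m) with hwdef
  -- the framework-vertex difference equals the edge vector
  have hqv : ∀ (e : E) (m : Fin d → ℤ),
      C.q (C.κ e) (C.kvec e + m) - C.q (C.τ e) (C.lvec e + m) = C.edgeVec e := by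
    intro e m
    have hL : ∀ k : Fin d → ℤ, C.L (k + m) = C.L k + C.L m := by
      intro k
      simp only [CrystalFramework.L, ← Finset.sum_add_distrib]
      refine Finset.sum_congr rfl fun i _ => ?_
      have : ((k + m) i : ℝ) = (k i : ℝ) + (m i : ℝ) := by push_cast; simp
      rw [this, add_smul]
    simp only [CrystalFramework.q, CrystalFramework.edgeVec, hL]
    abel
  -- the complexified vertex difference equals F e
  have hQ : ∀ (e : E) (m : Fin d → ℤ),
      ((WithLp.equiv 2 (Fin d → ℂ)).symm
          (fun σ => ((C.q (C.κ e) (C.kvec e + m) σ : ℝ) : ℂ)) -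
        (WithLp.equiv 2 (Fin d → ℂ)).symm
          (fun σ => ((C.q (C.τ e) (C.lvec e + m) σ : ℝ) : ℂ))) = F e := by
    intro e m
    have hcomp : ∀ σ, C.q (C.κ e) (C.kvec e + m) σ - C.q (C.τ e) (C.lvec e + m) σ
        = C.edgeVec e σ := by
      intro σ
      have := congrArg (fun x : EuclideanSpace ℝ (Fin d) => x σ) (hqv e m)
      simpa using this
    ext σ
    have := hcomp σ
    simp only [hFdef, PiLp.sub_apply, WithLp.equiv_symm_apply, PiLp.toLp_apply]
    rw [← Complex.ofReal_sub, this]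
  -- the motion difference
  have hdiff : ∀ (e : E) (m : Fin d → ℤ) (α t : ℝ),
      P α (C.κ e, C.kvec e + m) t - P α (C.τ e, C.lvec e + m) t
        = F e + Complex.exp (Complex.I * (α : ℂ) * (t : ℂ)) • w e m := by
    intro e m α t
    rw [hP, hP, hwdef]
    simp only [hut]
    rw [← hQ e m]
    rw [smul_sub]
    abel
  -- D in closed form
  have hDclosed : ∀ (e : E) (m : Fin d → ℤ) (α t : ℝ),
      D e m α t = ‖F e + Complex.exp (Complex.I * (α : ℂ) * (t : ℂ)) • w e m‖ -
        ‖F e + w e m‖ := by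
    intro e m α t
    rw [hD, hdiff, hdiff]
    norm_num
  -- the flex sum is the inner product
  have hsum : ∀ (e : E) (m : Fin d → ℤ),
      (∑ σ, (C.edgeVec e σ : ℂ) *
        (ut (C.κ e, C.kvec e + m) σ - ut (C.τ e, C.lvec e + m) σ))
        = (inner ℂ (F e) (w e m) : ℂ) := by
    intro e m
    rw [PiLp.inner_apply]
    refine Finset.sum_congr rfl fun σ _ => ?_
    simp only [hFdef, hwdef, RCLike.inner_apply, WithLp.equiv_symm_apply, PiLp.toLp_apply,
      Complex.conj_ofReal, PiLp.sub_apply]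
    exact mul_comm _ _
  constructor
  · intro hflex ε hε
    refine ⟨1, one_pos, fun α hα hα1 e m t => ?_⟩
    have hinner : (inner ℂ (F e) (w e m) : ℂ) = 0 := by
      rw [← hsum e m]; exact hflex e m
    have hnorm := (aux_inner_zero_iff (F e) (w e m)).mp hinner
    have habs1 : ‖Complex.exp (Complex.I * (α : ℂ) * (t : ℂ))‖ = 1 := by
      rw [Complex.norm_exp]
      simp [Complex.mul_re]
    rw [hDclosed, hnorm _ habs1]
    simpa using hε
  · intro h e m
    rw [hsum e m]
    apply (aux_inner_zero_iff (F e) (w e m)).mpr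
    intro z hz
    have habs : ∀ ε > (0:ℝ), |‖F e + z • w e m‖ - ‖F e + w e m‖| < ε := by
      intro ε hε
      obtain ⟨α₀, hα₀, hh⟩ := h ε hε
      have hαpos : (0:ℝ) < α₀ / 2 := by positivity
      have hαlt : α₀ / 2 < α₀ := by linarith
      have hthis := hh (α₀ / 2) hαpos hαlt e m (z.arg / (α₀ / 2))
      rw [hDclosed] at hthis
      have hexp : Complex.exp (Complex.I * ((α₀ / 2 : ℝ) : ℂ) *
          ((z.arg / (α₀ / 2) : ℝ) : ℂ)) = z := by
        have hne : ((α₀ : ℝ) : ℂ) ≠ 0 := by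
          exact_mod_cast ne_of_gt hα₀
        have harg : Complex.I * ((α₀ / 2 : ℝ) : ℂ) * ((z.arg / (α₀ / 2) : ℝ) : ℂ)
            = (z.arg : ℂ) * Complex.I := by
          push_cast
          field_simp [hne]
        rw [harg]
        have := Complex.norm_mul_exp_arg_mul_I z
        rwa [hz, Complex.ofReal_one, one_mul] at this
      rwa [hexp] at hthis
    have h0 : |‖F e + z • w e m‖ - ‖F e + w e m‖| = 0 := by
      by_contra hne
      exact absurd (habs _ (lt_of_le_of_ne (abs_nonneg _) (Ne.symm hne))) (lt_irrefl _)
    have := abs_eq_zero.mp h0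
    linarith [this]
end

section
/- Let C be a crystal framework in ℝ^d, let ω ∈ 𝕋^d, let u : V → ℂ^d, and let ũ(κ,k) = ω^k u(κ). Regard u as the vector in ℂ^{d|V|} with coordinates u(κ)_σ, indexed by pairs (κ,σ). Then for every e ∈ E and every m ∈ ℤ^d, ∑_{σ=1}^d (v_e)_σ ( ũ(κ(e), k(e)+m)_σ − ũ(τ(e), l(e)+m)_σ ) = ω^m (Φ_C(ω̄) u)_e, where ω̄ = (conj(ω_1), …, conj(ω_d)). That is, the restriction of the rigidity matrix of C to the space of velocity fields that are periodic-modulo-phase ω is represented by the matrix Φ_C(ω̄). -/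
open scoped BigOperators

open CrystalFramework in
theorem rigidity_restriction_represented_by_Phi
    {d : ℕ} {V E : Type} [Fintype V] [Fintype E] [DecidableEq V]
    (hd : 0 < d) (C : CrystalFramework d V E)
    (ω : Fin d → ℂ) (hω : OnTorus ω)
    (u : V → EuclideanSpace ℂ (Fin d)) :
    ∀ (e : E) (m : Fin d → ℤ),
      ∑ σ, (C.edgeVec e σ : ℂ) *
          ((zpow ω (C.kvec e + m) • u (C.κ e)) σ - (zpow ω (C.lvec e + m) • u (C.τ e)) σ)
        = zpow ω m *
            (C.Phi (fun i => (starRingEnd ℂ) (ω i))).mulVec (fun col => u col.1 col.2) e := by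
  intro e m
  have hne : ∀ i, ω i ≠ 0 := fun i h => by
    have := hω i; rw [h] at this; simp at this
  have hzadd : ∀ k l : Fin d → ℤ, zpow ω (k + l) = zpow ω k * zpow ω l := by
    intro k l
    simp only [zpow, ← Finset.prod_mul_distrib]
    refine Finset.prod_congr rfl fun i _ => ?_
    exact zpow_add₀ (hne i) (k i) (l i)
  have hcc : (fun i => (starRingEnd ℂ) ((fun j => (starRingEnd ℂ) (ω j)) i)) = ω := by
    funext i; exact Complex.conj_conj (ω i)
  simp only [Matrix.mulVec, dotProduct, CrystalFramework.Phi, hcc,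
    Fintype.sum_prod_type, PiLp.smul_apply, smul_eq_mul]
  by_cases h : C.κ e = C.τ e
  · simp only [if_pos h]
    have hk0 : C.kvec e = 0 := (C.reflexive e h).1
    rw [Finset.sum_comm]
    rw [Finset.mul_sum]
    refine Finset.sum_congr rfl fun σ _ => ?_
    simp only [ite_mul, zero_mul]
    rw [Finset.sum_ite_eq' Finset.univ (C.κ e) (fun κ₀ => (C.edgeVec e σ : ℂ) *
      (1 - zpow ω (C.lvec e)) * u κ₀ σ)]
    simp only [Finset.mem_univ, if_pos, h, hk0, hzadd]
    have h0 : zpow ω (0 : Fin d → ℤ) = 1 := by simp [zpow]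
    rw [h0]
    ring
  · simp only [if_neg h]
    rw [Finset.sum_comm, Finset.mul_sum]
    refine Finset.sum_congr rfl fun σ _ => ?_
    simp only [add_mul, ite_mul, zero_mul]
    rw [Finset.sum_add_distrib,
      Finset.sum_ite_eq' Finset.univ (C.κ e) (fun κ₀ => (C.edgeVec e σ : ℂ) *
        zpow ω (C.kvec e) * u κ₀ σ),
      Finset.sum_ite_eq' Finset.univ (C.τ e) (fun κ₀ => -(C.edgeVec e σ : ℂ) *
        zpow ω (C.lvec e) * u κ₀ σ)]
    simp only [Finset.mem_univ, if_pos, hzadd]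
    ring
end

section
/- Let C be a crystal framework in ℝ^d and ω ∈ 𝕋^d. There exists a nonzero wave flex of C with phase ω if and only if the matrix Φ_C(ω̄) has nontrivial kernel, where ω̄ = (conj(ω_1), …, conj(ω_d)). Consequently the RUM spectrum Ω(C) = {ω ∈ 𝕋^d : C has a nonzero wave flex with phase ω} equals {ω ∈ 𝕋^d : rank Φ_C(ω̄) < d|V|}. -/
open scoped BigOperators

namespace CrystalFramework

/-- `C` has a nonzero wave flex (periodic-modulo-phase infinitesimal flex) with phase `ω`. -/
def HasWaveFlex {d : ℕ} {V E : Type} [Fintype V] [Fintype E]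
    (C : CrystalFramework d V E) (ω : Fin d → ℂ) : Prop :=
  ∃ u : V → EuclideanSpace ℂ (Fin d),
    C.IsFlex (fun x => zpow ω x.2 • u x.1) ∧
      (fun x : V × (Fin d → ℤ) => zpow ω x.2 • u x.1) ≠ 0

end CrystalFramework


namespace CrystalFramework

variable {d : ℕ} {V E : Type} [Fintype V] [Fintype E]

lemma zpow_zero' (z : Fin d → ℂ) : zpow z 0 = 1 := by
  simp [zpow]

lemma zpow_ne_zero' {z : Fin d → ℂ} (hz : ∀ i, z i ≠ 0) (k : Fin d → ℤ) :
    zpow z k ≠ 0 :=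
  Finset.prod_ne_zero_iff.2 fun i _ => zpow_ne_zero _ (hz i)

lemma zpow_add' {z : Fin d → ℂ} (hz : ∀ i, z i ≠ 0) (k m : Fin d → ℤ) :
    zpow z (k + m) = zpow z k * zpow z m := by
  rw [zpow, zpow, zpow, ← Finset.prod_mul_distrib]
  exact Finset.prod_congr rfl fun i _ => by
    simpa using zpow_add₀ (hz i) (k i) (m i)

lemma exists_ker_iff_rank_lt {m n : Type} [Fintype m] [Fintype n] [DecidableEq n]
    (A : Matrix m n ℂ) :
    (∃ c : n → ℂ, c ≠ 0 ∧ A.mulVec c = 0) ↔ A.rank < Fintype.card n := by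
  have h := A.mulVecLin.finrank_range_add_finrank_ker
  rw [Module.finrank_fintype_fun_eq_card] at h
  have hker : (∃ c : n → ℂ, c ≠ 0 ∧ A.mulVec c = 0) ↔
      LinearMap.ker A.mulVecLin ≠ ⊥ := by
    rw [Submodule.ne_bot_iff]
    constructor
    · rintro ⟨c, hc, h0⟩
      exact ⟨c, by simpa [LinearMap.mem_ker, Matrix.mulVecLin_apply] using h0, hc⟩
    · rintro ⟨c, hm, hc⟩
      exact ⟨c, hc, by simpa [LinearMap.mem_ker, Matrix.mulVecLin_apply] using hm⟩
  rw [hker, Ne, ← Submodule.finrank_eq_zero (R := ℂ), Matrix.rank]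
  omega

lemma mulVec_eq [DecidableEq V] (C : CrystalFramework d V E) (ω : Fin d → ℂ)
    (c : V × Fin d → ℂ) (e : E) :
    (C.Phi (fun i => (starRingEnd ℂ) (ω i))).mulVec c e =
      ∑ σ, (C.edgeVec e σ : ℂ) *
        (zpow ω (C.kvec e) * c (C.κ e, σ) - zpow ω (C.lvec e) * c (C.τ e, σ)) := by
  have hz : (fun i => (starRingEnd ℂ) ((starRingEnd ℂ) (ω i))) = ω := by
    funext i; simp
  rw [Matrix.mulVec]
  unfold dotProduct Phi
  rw [Fintype.sum_prod_type]
  by_cases h : C.κ e = C.τ e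
  · have hk : C.kvec e = 0 := (C.reflexive e h).1
    simp only [h, if_pos rfl, hz]
    rw [Finset.sum_comm]
    simp only [ite_mul, zero_mul, Finset.sum_ite_eq', Finset.mem_univ, if_pos]
    rw [← h, hk, zpow_zero']
    exact Finset.sum_congr rfl fun σ _ => by ring
  · simp only [if_neg h, hz]
    rw [Finset.sum_comm]
    simp only [add_mul, ite_mul, zero_mul, Finset.sum_add_distrib,
      Finset.sum_ite_eq', Finset.mem_univ, if_pos]
    rw [← Finset.sum_add_distrib]
    exact Finset.sum_congr rfl fun σ _ => by ring

lemma flex_iff_mulVec [DecidableEq V] (C : CrystalFramework d V E) {ω : Fin d → ℂ}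
    (hω : ∀ i, ω i ≠ 0) (c : V × Fin d → ℂ) :
    C.IsFlex (fun x => zpow ω x.2 • (WithLp.toLp 2 (fun σ => c (x.1, σ)) : EuclideanSpace ℂ (Fin d))) ↔
      (C.Phi (fun i => (starRingEnd ℂ) (ω i))).mulVec c = 0 := by
  have hterm : ∀ (e : E) (m : Fin d → ℤ),
      (∑ σ, (C.edgeVec e σ : ℂ) *
        ((zpow ω (C.kvec e + m) • (WithLp.toLp 2 (fun σ => c (C.κ e, σ)) : EuclideanSpace ℂ (Fin d))) σ -
         (zpow ω (C.lvec e + m) • (WithLp.toLp 2 (fun σ => c (C.τ e, σ)) : EuclideanSpace ℂ (Fin d))) σ)) =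
      zpow ω m * (C.Phi (fun i => (starRingEnd ℂ) (ω i))).mulVec c e := by
    intro e m
    rw [mulVec_eq, Finset.mul_sum]
    refine Finset.sum_congr rfl fun σ _ => ?_
    have hsmul : ∀ (a : ℂ) (f : EuclideanSpace ℂ (Fin d)) (σ : Fin d),
        (a • f) σ = a * f σ := fun _ _ _ => rfl
    simp only [hsmul, PiLp.toLp_apply, zpow_add' hω]
    ring
  constructor
  · intro hf
    funext e
    have h0 := hf e 0
    rw [hterm e 0] at h0
    rcases mul_eq_zero.1 h0 with h1 | h1
    · exact absurd h1 (zpow_ne_zero' hω 0)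
    · simpa using h1
  · intro h e m
    rw [hterm e m, h]
    simp

lemma hasWaveFlex_iff [DecidableEq V] (C : CrystalFramework d V E) {ω : Fin d → ℂ}
    (hω : ∀ i, ω i ≠ 0) :
    C.HasWaveFlex ω ↔
      ∃ c : V × Fin d → ℂ, c ≠ 0 ∧
        (C.Phi (fun i => (starRingEnd ℂ) (ω i))).mulVec c = 0 := by
  constructor
  · rintro ⟨u, hf, hne⟩
    refine ⟨fun p => u p.1 p.2, ?_, ?_⟩
    · rcases Function.ne_iff.1 hne with ⟨x, hx⟩
      have hu : u x.1 ≠ 0 := by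
        intro h0
        apply hx
        simp [h0]
      rcases Function.ne_iff.1 (show (u x.1).ofLp ≠ 0 from fun h => hu (WithLp.ofLp_injective 2 (by simpa using h))) with ⟨σ, hσ⟩
      exact Function.ne_iff.2 ⟨(x.1, σ), hσ⟩
    · exact (C.flex_iff_mulVec hω _).1 hf
  · rintro ⟨c, hc, h⟩
    refine ⟨fun κ₀ => (WithLp.toLp 2 (fun σ => c (κ₀, σ)) : EuclideanSpace ℂ (Fin d)),
      (C.flex_iff_mulVec hω c).2 h, ?_⟩
    rcases Function.ne_iff.1 hc with ⟨⟨κ₀, σ⟩, hσ⟩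
    refine Function.ne_iff.2 ⟨(κ₀, 0), fun h0 => hσ ?_⟩
    have := congrFun (by rw [zpow_zero'] at h0; simpa using h0 : (fun σ => c (κ₀, σ)) = 0) σ
    simpa using this

end CrystalFramework

open CrystalFramework in
/-- there is a nonzero wave flex with phase `ω` iff `Φ_C(ω̄)` has nontrivial
kernel; consequently the RUM spectrum equals the set of torus points where
`rank Φ_C(ω̄) < d|V|`. -/
theorem hasWaveFlex_iff_Phi_kernel_nontrivial
    {d : ℕ} {V E : Type} [Fintype V] [Fintype E] [DecidableEq V]
    (hd : 0 < d) (C : CrystalFramework d V E)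
    (ω : Fin d → ℂ) (hω : OnTorus ω) :
    (C.HasWaveFlex ω ↔
      ∃ c : V × Fin d → ℂ, c ≠ 0 ∧
        (C.Phi (fun i => (starRingEnd ℂ) (ω i))).mulVec c = 0) ∧
    {ω' : Fin d → ℂ | OnTorus ω' ∧ C.HasWaveFlex ω'} =
      {ω' : Fin d → ℂ | OnTorus ω' ∧
        (C.Phi (fun i => (starRingEnd ℂ) (ω' i))).rank < d * Fintype.card V} := by
  have hω' : ∀ i, ω i ≠ 0 := fun i h0 => by simpa [h0] using hω i
  constructor
  · exact C.hasWaveFlex_iff hω'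
  · ext ω'
    simp only [Set.mem_setOf_eq]
    constructor
    · rintro ⟨ht, hw⟩
      refine ⟨ht, ?_⟩
      have hω'' : ∀ i, ω' i ≠ 0 := fun i h0 => by simpa [h0] using ht i
      have := (C.hasWaveFlex_iff hω'').1 hw
      have h2 := (exists_ker_iff_rank_lt (C.Phi (fun i => (starRingEnd ℂ) (ω' i)))).1 this
      simpa [Fintype.card_prod, Fintype.card_fin, mul_comm] using h2
    · rintro ⟨ht, hr⟩
      refine ⟨ht, ?_⟩
      have hω'' : ∀ i, ω' i ≠ 0 := fun i h0 => by simpa [h0] using ht i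
      refine (C.hasWaveFlex_iff hω'').2 ?_
      refine (exists_ker_iff_rank_lt (C.Phi (fun i => (starRingEnd ℂ) (ω' i)))).2 ?_
      simpa [Fintype.card_prod, Fintype.card_fin, mul_comm] using hr
end

section
/- Let C be a crystal framework in ℝ^d which admits a nonzero finitely supported complex infinitesimal flex. Then for every ω ∈ 𝕋^d the matrix Φ_C(ω) has nontrivial kernel; equivalently, for every ω ∈ 𝕋^d there is a nonzero wave flex of C with phase ω, so the RUM spectrum of C is all of 𝕋^d. -/
open scoped BigOperators

/-! ### Auxiliary machinery for the main theorem -/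

namespace RUMProof

open CrystalFramework Filter Function

variable {d : ℕ} {V E : Type} [Fintype V] [Fintype E]

/-! #### Elementary facts about `zpow` -/

lemma zpow_ne_zero' {w : Fin d → ℂ} (hw : ∀ i, w i ≠ 0) (k : Fin d → ℤ) :
    zpow w k ≠ 0 :=
  Finset.prod_ne_zero_iff.2 fun i _ => zpow_ne_zero _ (hw i)

lemma zpow_zero' (w : Fin d → ℂ) : zpow w (0 : Fin d → ℤ) = 1 := by
  simp [CrystalFramework.zpow]

lemma zpow_add' {w : Fin d → ℂ} (hw : ∀ i, w i ≠ 0) (k l : Fin d → ℤ) :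
    zpow w (k + l) = zpow w k * zpow w l := by
  rw [CrystalFramework.zpow, CrystalFramework.zpow, CrystalFramework.zpow,
    ← Finset.prod_mul_distrib]
  refine Finset.prod_congr rfl fun i _ => ?_
  simpa using zpow_add₀ (hw i) (k i) (l i)

lemma onTorus_ne_zero {ω : Fin d → ℂ} (hω : OnTorus ω) (i : Fin d) : ω i ≠ 0 := by
  intro h
  have := hω i
  rw [h] at this
  simp at this

lemma conj_mul_self {ω : Fin d → ℂ} (hω : OnTorus ω) (i : Fin d) :
    (starRingEnd ℂ) (ω i) * ω i = 1 := by
  have h1 : Complex.normSq (ω i) = 1 := by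
    rw [Complex.normSq_eq_norm_sq, hω i]; norm_num
  rw [mul_comm, Complex.mul_conj, h1, Complex.ofReal_one]

lemma zbar_mul_zpow {ω : Fin d → ℂ} (hω : OnTorus ω) (k : Fin d → ℤ) :
    zpow (fun i => (starRingEnd ℂ) (ω i)) k * zpow ω k = 1 := by
  rw [CrystalFramework.zpow, CrystalFramework.zpow, ← Finset.prod_mul_distrib]
  refine Finset.prod_eq_one fun i _ => ?_
  rw [← mul_zpow, conj_mul_self hω i, one_zpow]

lemma onTorus_conj {ω : Fin d → ℂ} (hω : OnTorus ω) :
    OnTorus (fun i => (starRingEnd ℂ) (ω i)) := fun i => by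
  rw [Complex.norm_conj]; exact hω i

/-! #### Linear algebra helpers -/

lemma continuousAt_det_comp {n : Type} [Fintype n] [DecidableEq n]
    {f : ℂ → Matrix n n ℂ} {x : ℂ} (h : ∀ i j, ContinuousAt (fun s => f s i j) x) :
    ContinuousAt (fun s => (f s).det) x := by
  simp only [Matrix.det_apply']
  exact tendsto_finset_sum _ fun σ _ =>
    tendsto_const_nhds.mul (tendsto_finset_prod _ fun i _ => h (σ i) i)

lemma star_dot_self_eq_zero {n : Type} [Fintype n] {v : n → ℂ}
    (h : dotProduct (star v) v = 0) : v = 0 := by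
  have h1 : dotProduct (star v) v = ((∑ j, Complex.normSq (v j) : ℝ) : ℂ) := by
    rw [dotProduct]
    push_cast
    refine Finset.sum_congr rfl fun j _ => ?_
    simp [Pi.star_apply, Complex.star_def, mul_comm, Complex.mul_conj]
  rw [h1] at h
  have h2 : ∑ j, Complex.normSq (v j) = 0 := by exact_mod_cast h
  funext i
  have h3 := (Finset.sum_eq_zero_iff_of_nonneg
    (fun j _ => Complex.normSq_nonneg (v j))).1 h2 i (Finset.mem_univ i)
  exact Complex.normSq_eq_zero.1 h3

lemma gram_det_ne_zero {m n : Type} [Fintype m] [Fintype n] [DecidableEq n]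
    {N : Matrix m n ℂ} (h : ∀ c : n → ℂ, N.mulVec c = 0 → c = 0) :
    (N.conjTranspose * N).det ≠ 0 := by
  intro h0
  obtain ⟨c, hc0, hc⟩ := Matrix.exists_mulVec_eq_zero_iff.2 h0
  apply hc0
  apply h
  have h1 : dotProduct (star (N.mulVec c)) (N.mulVec c) = 0 := by
    calc dotProduct (star (N.mulVec c)) (N.mulVec c)
        = dotProduct (Matrix.vecMul (star c) N.conjTranspose) (N.mulVec c) := by
          rw [Matrix.star_mulVec]
      _ = dotProduct (star c) (N.conjTranspose.mulVec (N.mulVec c)) :=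
          (Matrix.dotProduct_mulVec _ _ _).symm
      _ = dotProduct (star c) ((N.conjTranspose * N).mulVec c) := by
          rw [Matrix.mulVec_mulVec]
      _ = 0 := by rw [hc]; simp
  exact star_dot_self_eq_zero h1

lemma det_ne_zero_inj {n : Type} [Fintype n] [DecidableEq n]
    {A : Matrix n n ℂ} (h : A.det ≠ 0) {c : n → ℂ} (hc : A.mulVec c = 0) : c = 0 := by
  by_contra h0
  exact h (Matrix.exists_mulVec_eq_zero_iff.1 ⟨c, h0, hc⟩)

/-! #### Support lemmas -/

lemma comp_mem_support {u : V × (Fin d → ℤ) → EuclideanSpace ℂ (Fin d)}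
    {κ' : V} {σ : Fin d} {k : Fin d → ℤ} (h : u (κ', k) σ ≠ 0) :
    k ∈ Prod.snd '' Function.support u :=
  ⟨(κ', k), fun h0 => h (by rw [h0]; rfl), rfl⟩

lemma supp_shift_finite {u : V × (Fin d → ℤ) → EuclideanSpace ℂ (Fin d)}
    (hfin : (Function.support u).Finite) (κ' : V) (σ : Fin d)
    (g : (Fin d → ℤ) → ℂ) (t : Fin d → ℤ) :
    (Function.support fun m => g m * u (κ', t + m) σ).Finite := by
  refine Set.Finite.subset
    ((hfin.image Prod.snd).preimage ((add_right_injective t).injOn)) ?_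
  intro m hm
  simp only [Function.mem_support] at hm
  have hu : u (κ', t + m) σ ≠ 0 := fun h0 => hm (by rw [h0, mul_zero])
  exact Set.mem_preimage.2 (comp_mem_support hu)

lemma supp_plain_finite {u : V × (Fin d → ℤ) → EuclideanSpace ℂ (Fin d)}
    (hfin : (Function.support u).Finite) (κ' : V) (σ : Fin d)
    (g : (Fin d → ℤ) → ℂ) :
    (Function.support fun k => g k * u (κ', k) σ).Finite := by
  refine Set.Finite.subset (hfin.image Prod.snd) ?_
  intro k hk
  simp only [Function.mem_support] at hk
  have hu : u (κ', k) σ ≠ 0 := fun h0 => hk (by rw [h0, mul_zero])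
  exact comp_mem_support hu

lemma supp_shift2_finite {u : V × (Fin d → ℤ) → EuclideanSpace ℂ (Fin d)}
    (hfin : (Function.support u).Finite) (κ' κ'' : V) (σ : Fin d)
    (g : (Fin d → ℤ) → ℂ) (t t' : Fin d → ℤ) :
    (Function.support fun m => g m * (u (κ', t + m) σ - u (κ'', t' + m) σ)).Finite := by
  refine Set.Finite.subset (Set.Finite.union
    ((hfin.image Prod.snd).preimage ((add_right_injective t).injOn))
    ((hfin.image Prod.snd).preimage ((add_right_injective t').injOn))) ?_
  intro m hm
  simp only [Function.mem_support] at hm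
  by_contra hc
  simp only [Set.mem_union, Set.mem_preimage] at hc
  push_neg at hc
  have h1 : u (κ', t + m) σ = 0 := by
    by_contra h; exact hc.1 (comp_mem_support h)
  have h2 : u (κ'', t' + m) σ = 0 := by
    by_contra h; exact hc.2 (comp_mem_support h)
  exact hm (by rw [h1, h2, sub_zero, mul_zero])

/-! #### The Fourier-type transform of a finitely supported flex -/

/-- The transform `w ↦ ∑_k ω^k w^k u(κ,k)_σ` of a finitely supported velocity field. -/
noncomputable def transform (u : V × (Fin d → ℤ) → EuclideanSpace ℂ (Fin d))
    (ω w : Fin d → ℂ) (x : V × Fin d) : ℂ :=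
  ∑ᶠ k : Fin d → ℤ, zpow ω k * zpow w k * u (x.1, k) x.2

/-- The row sum associated to an edge of the symbol-type matrices. -/
noncomputable def rowSum (C : CrystalFramework d V E) (ω : Fin d → ℂ)
    (c : V × Fin d → ℂ) (e : E) : ℂ :=
  ∑ σ, (C.edgeVec e σ : ℂ) *
    (zpow (fun i => (starRingEnd ℂ) (ω i)) (C.kvec e) * c (C.κ e, σ) -
     zpow (fun i => (starRingEnd ℂ) (ω i)) (C.lvec e) * c (C.τ e, σ))

/-- The fundamental identity: the transform satisfies the (twisted) row equations at every
nonvanishing point `w`. -/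
lemma transform_rows (C : CrystalFramework d V E)
    {u : V × (Fin d → ℤ) → EuclideanSpace ℂ (Fin d)}
    (hflex : C.IsFlex u) (hfin : (Function.support u).Finite)
    {ω : Fin d → ℂ} (hω : OnTorus ω) {w : Fin d → ℂ} (hw : ∀ i, w i ≠ 0) (e : E) :
    ∑ σ, (C.edgeVec e σ : ℂ) *
      (zpow (fun i => (starRingEnd ℂ) (ω i)) (C.kvec e) * zpow w (C.lvec e) *
          transform u ω w (C.κ e, σ) -
       zpow (fun i => (starRingEnd ℂ) (ω i)) (C.lvec e) * zpow w (C.kvec e) *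
          transform u ω w (C.τ e, σ)) = 0 := by
  have hω0 := onTorus_ne_zero hω
  have key1 : ∀ (κ' : V) (σ : Fin d) (t s : Fin d → ℤ),
      zpow (fun i => (starRingEnd ℂ) (ω i)) t * zpow w s * transform u ω w (κ', σ)
        = ∑ᶠ m : Fin d → ℤ, zpow ω m * zpow w (t + s + m) * u (κ', t + m) σ := by
    intro κ' σ t s
    simp only [transform]
    rw [mul_finsum' _ _ (supp_plain_finite hfin κ' σ (fun k => zpow ω k * zpow w k))]
    rw [← finsum_comp_equiv (Equiv.addLeft t)]
    refine finsum_congr fun m => ?_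
    simp only [Equiv.coe_addLeft]
    have e4 := zbar_mul_zpow hω t
    rw [zpow_add' hω0 t m, zpow_add' hw t m, zpow_add' hw (t + s) m, zpow_add' hw t s]
    linear_combination (zpow ω m * zpow w t * zpow w s * zpow w m * u (κ', t + m) σ) * e4
  have key2 : ∀ σ : Fin d, (C.edgeVec e σ : ℂ) *
      (zpow (fun i => (starRingEnd ℂ) (ω i)) (C.kvec e) * zpow w (C.lvec e) *
          transform u ω w (C.κ e, σ) -
       zpow (fun i => (starRingEnd ℂ) (ω i)) (C.lvec e) * zpow w (C.kvec e) *
          transform u ω w (C.τ e, σ))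
      = ∑ᶠ m : Fin d → ℤ,
          (zpow ω m * zpow w (C.kvec e + C.lvec e + m) * (C.edgeVec e σ : ℂ)) *
            (u (C.κ e, C.kvec e + m) σ - u (C.τ e, C.lvec e + m) σ) := by
    intro σ
    have hA := key1 (C.κ e) σ (C.kvec e) (C.lvec e)
    have hB := key1 (C.τ e) σ (C.lvec e) (C.kvec e)
    rw [add_comm (C.lvec e) (C.kvec e)] at hB
    rw [hA, hB]
    rw [← finsum_sub_distrib
      (supp_shift_finite hfin (C.κ e) σ
        (fun m => zpow ω m * zpow w (C.kvec e + C.lvec e + m)) (C.kvec e))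
      (supp_shift_finite hfin (C.τ e) σ
        (fun m => zpow ω m * zpow w (C.kvec e + C.lvec e + m)) (C.lvec e))]
    rw [mul_finsum' _ _ ?hfs]
    case hfs =>
      refine Set.Finite.subset (Set.Finite.union
        (supp_shift_finite hfin (C.κ e) σ
          (fun m => zpow ω m * zpow w (C.kvec e + C.lvec e + m)) (C.kvec e))
        (supp_shift_finite hfin (C.τ e) σ
          (fun m => zpow ω m * zpow w (C.kvec e + C.lvec e + m)) (C.lvec e))) ?_
      exact Function.support_sub _ _
    refine finsum_congr fun m => ?_
    ring
  calc ∑ σ, (C.edgeVec e σ : ℂ) *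
      (zpow (fun i => (starRingEnd ℂ) (ω i)) (C.kvec e) * zpow w (C.lvec e) *
          transform u ω w (C.κ e, σ) -
       zpow (fun i => (starRingEnd ℂ) (ω i)) (C.lvec e) * zpow w (C.kvec e) *
          transform u ω w (C.τ e, σ))
      = ∑ σ, ∑ᶠ m : Fin d → ℤ,
          (zpow ω m * zpow w (C.kvec e + C.lvec e + m) * (C.edgeVec e σ : ℂ)) *
            (u (C.κ e, C.kvec e + m) σ - u (C.τ e, C.lvec e + m) σ) :=
        Finset.sum_congr rfl fun σ _ => key2 σ
    _ = ∑ᶠ m : Fin d → ℤ, ∑ σ,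
          (zpow ω m * zpow w (C.kvec e + C.lvec e + m) * (C.edgeVec e σ : ℂ)) *
            (u (C.κ e, C.kvec e + m) σ - u (C.τ e, C.lvec e + m) σ) :=
        sum_finsum_comm _ _ fun σ _ =>
          supp_shift2_finite hfin (C.κ e) (C.τ e) σ
            (fun m => zpow ω m * zpow w (C.kvec e + C.lvec e + m) * (C.edgeVec e σ : ℂ))
            (C.kvec e) (C.lvec e)
    _ = 0 := by
        refine finsum_eq_zero_of_forall_eq_zero fun m => ?_
        have h0 := hflex e m
        calc ∑ σ, (zpow ω m * zpow w (C.kvec e + C.lvec e + m) * (C.edgeVec e σ : ℂ)) *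
              (u (C.κ e, C.kvec e + m) σ - u (C.τ e, C.lvec e + m) σ)
            = zpow ω m * zpow w (C.kvec e + C.lvec e + m) *
                ∑ σ, (C.edgeVec e σ : ℂ) *
                  (u (C.κ e, C.kvec e + m) σ - u (C.τ e, C.lvec e + m) σ) := by
              rw [Finset.mul_sum]
              exact Finset.sum_congr rfl fun σ _ => by ring
          _ = 0 := by rw [h0, mul_zero]


set_option maxHeartbeats 1000000 in
/-- The key lemma: a nonzero finitely supported flex yields, for every torus point, a
nonzero solution of the row equations. -/
lemma key_lemma (C : CrystalFramework d V E)
    {u : V × (Fin d → ℤ) → EuclideanSpace ℂ (Fin d)}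
    (hflex : C.IsFlex u) (hne : u ≠ 0) (hfin : (Function.support u).Finite)
    {ω : Fin d → ℂ} (hω : OnTorus ω) :
    ∃ c : V × Fin d → ℂ, c ≠ 0 ∧ ∀ e, rowSum C ω c e = 0 := by
  classical
  have hω0 := onTorus_ne_zero hω
  -- a nonzero coordinate of u
  obtain ⟨⟨κ₀, k₀⟩, hx₀⟩ : ∃ x, u x ≠ 0 := by
    by_contra hc
    push_neg at hc
    exact hne (funext hc)
  obtain ⟨σ₀, hσ₀⟩ : ∃ σ₀, u (κ₀, k₀) σ₀ ≠ 0 := by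
    by_contra hc
    push_neg at hc
    apply hx₀
    ext σ
    simpa using hc σ
  -- the support Finset
  set S : Finset (Fin d → ℤ) := hfin.toFinset.image Prod.snd with hSdef
  have hcompS : ∀ (κ' : V) (σ : Fin d) (k : Fin d → ℤ), u (κ', k) σ ≠ 0 → k ∈ S := by
    intro κ' σ k h
    obtain ⟨x, hx, hxk⟩ := comp_mem_support h
    exact Finset.mem_image.2 ⟨x, hfin.mem_toFinset.2 hx, hxk⟩
  -- the exponent offset
  set N : Fin d → ℤ := fun i => ∑ k ∈ S, |k i| with hNdef
  have hkN : ∀ k ∈ S, ∀ i, 0 ≤ k i + N i := by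
    intro k hk i
    have h1 : |k i| ≤ N i := by
      simp only [hNdef]
      exact Finset.single_le_sum (fun k' _ => abs_nonneg (k' i)) hk
    have h2 := neg_abs_le (k i)
    linarith
  -- the transform as a finite sum
  have hFS : ∀ (w : Fin d → ℂ) (κ' : V) (σ : Fin d),
      transform u ω w (κ', σ) = ∑ k ∈ S, zpow ω k * zpow w k * u (κ', k) σ := by
    intro w κ' σ
    simp only [transform]
    refine finsum_eq_sum_of_support_subset _ ?_
    intro k hk
    simp only [Function.mem_support] at hk
    have h1 : u (κ', k) σ ≠ 0 := fun h => hk (by rw [h, mul_zero])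
    exact hcompS κ' σ k h1
  set coef : (Fin d → ℤ) → ℂ := fun k => zpow ω k * u (κ₀, k) σ₀ with hcoefdef
  have hsum : ∀ w : Fin d → ℂ, (∀ i, w i ≠ 0) →
      (∑ k ∈ S, coef k * ∏ i, w i ^ ((k i + N i).toNat)) =
        zpow w N * transform u ω w (κ₀, σ₀) := by
    intro w hw
    rw [hFS w κ₀ σ₀, Finset.mul_sum]
    refine Finset.sum_congr rfl fun k hk => ?_
    have h1 : ∀ i : Fin d, w i ^ ((k i + N i).toNat) = w i ^ (k i + N i) := fun i => by
      rw [← zpow_natCast, Int.toNat_of_nonneg (hkN k hk i)]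
    rw [Finset.prod_congr rfl fun i _ => h1 i]
    have h2 : ∏ i, w i ^ (k i + N i) = zpow w k * zpow w N := by
      rw [← zpow_add' hw]
      rfl
    rw [h2, hcoefdef]
    ring
  -- a good evaluation point from multivariate polynomial theory
  set expOf : (Fin d → ℤ) → (Fin d →₀ ℕ) :=
    fun k => Finsupp.equivFunOnFinite.symm (fun i => (k i + N i).toNat) with hexpdef
  have hexpInj : ∀ k ∈ S, ∀ k' ∈ S, expOf k = expOf k' → k = k' := by
    intro k hk k' hk' h
    funext i
    have h2 : ((k i + N i).toNat : ℕ) = (k' i + N i).toNat := by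
      have h3 := DFunLike.congr_fun h i
      simpa [hexpdef] using h3
    have hk1 := hkN k hk i
    have hk2 := hkN k' hk' i
    omega
  set Qp : MvPolynomial (Fin d) ℂ :=
    ∑ k ∈ S, MvPolynomial.monomial (expOf k) (coef k) with hQdef
  have hk₀S : k₀ ∈ S := hcompS κ₀ σ₀ k₀ hσ₀
  have hQne : Qp ≠ 0 := by
    intro h0
    have hcoeff : MvPolynomial.coeff (expOf k₀) Qp = coef k₀ := by
      rw [hQdef, MvPolynomial.coeff_sum]
      rw [Finset.sum_eq_single k₀]
      · rw [MvPolynomial.coeff_monomial, if_pos rfl]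
      · intro k hk hkne
        rw [MvPolynomial.coeff_monomial, if_neg (fun h => hkne (hexpInj k hk k₀ hk₀S h))]
      · intro h
        exact absurd hk₀S h
    rw [h0] at hcoeff
    simp only [MvPolynomial.coeff_zero] at hcoeff
    have : coef k₀ ≠ 0 := mul_ne_zero (zpow_ne_zero' hω0 k₀) hσ₀
    exact this hcoeff.symm
  obtain ⟨a, hQa, ha0⟩ : ∃ a : Fin d → ℂ,
      MvPolynomial.eval a Qp ≠ 0 ∧ ∀ i, a i ≠ 0 := by
    by_contra hcon
    push_neg at hcon
    have hall : ∀ x : Fin d → ℂ,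
        MvPolynomial.eval x (Qp * ∏ i, MvPolynomial.X i) = MvPolynomial.eval x 0 := by
      intro x
      rw [map_mul, map_zero]
      by_cases hx : MvPolynomial.eval x Qp = 0
      · rw [hx, zero_mul]
      · obtain ⟨i, hi⟩ := hcon x hx
        have hz : MvPolynomial.eval x (∏ j, MvPolynomial.X j) = 0 := by
          rw [map_prod]
          exact Finset.prod_eq_zero (Finset.mem_univ i) (by simp [hi])
        rw [hz, mul_zero]
    have h0 := MvPolynomial.funext hall
    exact (mul_ne_zero hQne
      (Finset.prod_ne_zero_iff.2 fun i _ => MvPolynomial.X_ne_zero i)) h0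
  have hQeval : ∀ x : Fin d → ℂ, MvPolynomial.eval x Qp
      = ∑ k ∈ S, coef k * ∏ i, x i ^ ((k i + N i).toNat) := by
    intro x
    rw [hQdef, map_sum]
    refine Finset.sum_congr rfl fun k hk => ?_
    rw [MvPolynomial.eval_monomial]
    rw [Finsupp.prod_fintype _ _ (fun i => pow_zero _)]
    simp [hexpdef]
  have hFa : transform u ω a (κ₀, σ₀) ≠ 0 := by
    intro h
    apply hQa
    rw [hQeval a, hsum a ha0, h, mul_zero]
  -- main contradiction argument
  by_contra hcon
  push_neg at hcon
  have hinj0 : ∀ c : V × Fin d → ℂ, (∀ e, rowSum C ω c e = 0) → c = 0 := by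
    intro c hc
    by_contra h
    obtain ⟨e, he⟩ := hcon c h
    exact he (hc e)
  -- the perturbation curve and the matrices
  set wf : ℂ → Fin d → ℂ := fun s i => 1 + s * (a i - 1) with hwfdef
  set Mf : ℂ → Matrix E (V × Fin d) ℂ := fun s e x =>
    (if x.1 = C.κ e then (C.edgeVec e x.2 : ℂ) *
        (zpow (fun i => (starRingEnd ℂ) (ω i)) (C.kvec e) * zpow (wf s) (C.lvec e)) else 0) +
    (if x.1 = C.τ e then -((C.edgeVec e x.2 : ℂ) *
        (zpow (fun i => (starRingEnd ℂ) (ω i)) (C.lvec e) * zpow (wf s) (C.kvec e))) else 0)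
    with hMdef
  have hmulVec : ∀ (s : ℂ) (c : V × Fin d → ℂ) (e : E),
      (Mf s).mulVec c e =
        ∑ σ, (C.edgeVec e σ : ℂ) *
          (zpow (fun i => (starRingEnd ℂ) (ω i)) (C.kvec e) * zpow (wf s) (C.lvec e) *
              c (C.κ e, σ) -
           zpow (fun i => (starRingEnd ℂ) (ω i)) (C.lvec e) * zpow (wf s) (C.kvec e) *
              c (C.τ e, σ)) := by
    intro s c e
    simp only [hMdef, Matrix.mulVec, dotProduct]
    rw [Fintype.sum_prod_type]
    rw [Finset.sum_comm]
    refine Finset.sum_congr rfl fun σ _ => ?_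
    simp only [add_mul, ite_mul, zero_mul, neg_mul, Finset.sum_add_distrib,
      Finset.sum_ite_eq' Finset.univ, Finset.mem_univ, if_true]
    ring
  set Nmat : Matrix E (V × Fin d) ℂ := Mf 0 with hNmatdef
  have hzw0 : ∀ k : Fin d → ℤ, zpow (wf 0) k = 1 := by
    intro k
    simp [hwfdef, CrystalFramework.zpow]
  have hNrow : ∀ (c : V × Fin d → ℂ) (e : E), Nmat.mulVec c e = rowSum C ω c e := by
    intro c e
    rw [hNmatdef, hmulVec]
    simp only [rowSum]
    refine Finset.sum_congr rfl fun σ _ => ?_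
    rw [hzw0, hzw0, mul_one, mul_one]
  have hNinj : ∀ c : V × Fin d → ℂ, Nmat.mulVec c = 0 → c = 0 := by
    intro c hc
    refine hinj0 c fun e => ?_
    rw [← hNrow c e, hc]
    rfl
  have hdetG := gram_det_ne_zero hNinj
  -- continuity of the perturbed Gram determinant
  have hzwcont : ∀ k : Fin d → ℤ, ContinuousAt (fun s : ℂ => zpow (wf s) k) 0 := by
    intro k
    simp only [CrystalFramework.zpow]
    refine tendsto_finset_prod _ fun i _ => ?_
    have h1 : ContinuousAt (fun s : ℂ => 1 + s * (a i - 1)) 0 := by fun_prop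
    refine h1.zpow₀ (k i) (Or.inl ?_)
    norm_num
  have hMcont : ∀ (e : E) (x : V × Fin d), ContinuousAt (fun s => Mf s e x) 0 := by
    intro e x
    simp only [hMdef]
    apply ContinuousAt.add
    · by_cases h : x.1 = C.κ e
      · simp only [if_pos h]
        exact continuousAt_const.mul (continuousAt_const.mul (hzwcont (C.lvec e)))
      · simp only [if_neg h]
        exact continuousAt_const
    · by_cases h : x.1 = C.τ e
      · simp only [if_pos h]
        exact (continuousAt_const.mul (continuousAt_const.mul (hzwcont (C.kvec e)))).neg
      · simp only [if_neg h]
        exact continuousAt_const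
  have hev1 : ∀ᶠ s in nhds (0 : ℂ), (Nmat.conjTranspose * Mf s).det ≠ 0 := by
    have hDcont : ContinuousAt (fun s => (Nmat.conjTranspose * Mf s).det) 0 := by
      apply continuousAt_det_comp
      intro i j
      simp only [Matrix.mul_apply]
      exact tendsto_finset_sum _ fun e _ => tendsto_const_nhds.mul (hMcont e j)
    refine hDcont.eventually_ne ?_
    rw [← hNmatdef]
    exact hdetG
  have hev2 : ∀ᶠ s in nhds (0 : ℂ), ∀ i, wf s i ≠ 0 := by
    rw [Filter.eventually_all]
    intro i
    have hc : ContinuousAt (fun s : ℂ => wf s i) 0 := by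
      simp only [hwfdef]
      fun_prop
    refine hc.eventually_ne ?_
    simp [hwfdef]
  -- the one-variable polynomial
  set Pf : Polynomial ℂ := ∑ k ∈ S, Polynomial.C (coef k) *
      ∏ i, (1 + Polynomial.C (a i - 1) * Polynomial.X) ^ ((k i + N i).toNat) with hPdef
  have hPeval : ∀ s : ℂ, Polynomial.eval s Pf
      = ∑ k ∈ S, coef k * ∏ i, (wf s i) ^ ((k i + N i).toNat) := by
    intro s
    rw [hPdef, Polynomial.eval_finset_sum]
    refine Finset.sum_congr rfl fun k _ => ?_
    rw [Polynomial.eval_mul, Polynomial.eval_C, Polynomial.eval_prod]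
    congr 1
    refine Finset.prod_congr rfl fun i _ => ?_
    rw [Polynomial.eval_pow, Polynomial.eval_add, Polynomial.eval_one, Polynomial.eval_mul,
      Polynomial.eval_C, Polynomial.eval_X]
    have hwfi : wf s i = 1 + s * (a i - 1) := by rw [hwfdef]
    rw [hwfi]
    congr 1
    ring
  have hFzero : ∀ᶠ s in nhds (0 : ℂ), Polynomial.eval s Pf = 0 := by
    filter_upwards [hev1, hev2] with s hs1 hs2
    have hrows : (Mf s).mulVec (transform u ω (wf s)) = 0 := by
      funext e
      rw [hmulVec]
      have := transform_rows C hflex hfin hω hs2 e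
      simpa using this
    have h1 : (Nmat.conjTranspose * Mf s).mulVec (transform u ω (wf s)) = 0 := by
      rw [← Matrix.mulVec_mulVec, hrows, Matrix.mulVec_zero]
    have h2 : transform u ω (wf s) = 0 := det_ne_zero_inj hs1 h1
    rw [hPeval s, hsum (wf s) hs2]
    have h3 : transform u ω (wf s) (κ₀, σ₀) = 0 := by rw [h2]; rfl
    rw [h3, mul_zero]
  have hP0 : Pf = 0 := by
    refine Polynomial.eq_zero_of_infinite_isRoot _ ?_
    obtain ⟨ε, hε, hball⟩ := Metric.mem_nhds_iff.1 hFzero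
    refine Set.infinite_of_injective_forall_mem
      (f := fun n : ℕ => (((ε / ((n : ℝ) + 2)) : ℝ) : ℂ)) ?_ ?_
    · intro n m hnm
      simp only [Complex.ofReal_inj] at hnm
      have hn2 : ((n : ℝ) + 2) ≠ 0 := by positivity
      have hm2 : ((m : ℝ) + 2) ≠ 0 := by positivity
      rw [div_eq_div_iff hn2 hm2] at hnm
      have h2 := mul_left_cancel₀ (ne_of_gt hε) hnm
      have h3 : (n : ℝ) = m := by linarith
      exact_mod_cast h3
    · intro n
      apply hball
      have hn2 : (0 : ℝ) < (n : ℝ) + 2 := by positivity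
      have hlt : ε / ((n : ℝ) + 2) < ε := by
        refine div_lt_self hε ?_
        have h4 : (0 : ℝ) ≤ (n : ℝ) := Nat.cast_nonneg n
        linarith
      simp only [Metric.mem_ball, Complex.dist_eq, sub_zero]
      rw [Complex.norm_real, Real.norm_eq_abs]
      rw [abs_of_pos (by positivity)]
      exact hlt
  -- contradiction
  have hfinal := hPeval 1
  rw [hP0] at hfinal
  simp only [Polynomial.eval_zero] at hfinal
  have hwa : wf 1 = a := by
    funext i
    simp [hwfdef]
  rw [hwa, hsum a ha0] at hfinal
  exact (mul_ne_zero (zpow_ne_zero' ha0 N) hFa) hfinal.symm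


/-- The rows of the symbol matrix are given by `rowSum`. -/
lemma phi_mulVec [DecidableEq V] (C : CrystalFramework d V E) (ω : Fin d → ℂ)
    (c : V × Fin d → ℂ) (e : E) : (C.Phi ω).mulVec c e = rowSum C ω c e := by
  classical
  by_cases h : C.κ e = C.τ e
  · have hk0 : C.kvec e = 0 := (C.reflexive e h).1
    simp only [Phi, Matrix.mulVec, dotProduct, if_pos h, rowSum]
    rw [Fintype.sum_prod_type]
    rw [Finset.sum_comm]
    refine Finset.sum_congr rfl fun σ _ => ?_
    simp only [ite_mul, zero_mul, Finset.sum_ite_eq' Finset.univ, Finset.mem_univ, if_true]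
    rw [hk0, zpow_zero']
    rw [← h]
    ring
  · simp only [Phi, Matrix.mulVec, dotProduct, if_neg h, rowSum]
    rw [Fintype.sum_prod_type]
    rw [Finset.sum_comm]
    refine Finset.sum_congr rfl fun σ _ => ?_
    simp only [add_mul, ite_mul, zero_mul, neg_mul, Finset.sum_add_distrib,
      Finset.sum_ite_eq' Finset.univ, Finset.mem_univ, if_true]
    ring


end RUMProof

open CrystalFramework in
/-- if a crystal framework has a nonzero finitely supported infinitesimal
flex, then for every torus point `ω` the matrix `Φ_C(ω)` has nontrivial kernel;
equivalently there is a nonzero wave flex with every phase, i.e. the RUM spectrum is the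
whole torus. -/
theorem local_flex_implies_full_RUM_spectrum
    {d : ℕ} {V E : Type} [Fintype V] [Fintype E] [DecidableEq V]
    (hd : 0 < d) (C : CrystalFramework d V E)
    (hloc : ∃ u : V × (Fin d → ℤ) → EuclideanSpace ℂ (Fin d),
      C.IsFlex u ∧ u ≠ 0 ∧ (Function.support u).Finite) :
    ∀ ω : Fin d → ℂ, OnTorus ω →
      (∃ c : V × Fin d → ℂ, c ≠ 0 ∧ (C.Phi ω).mulVec c = 0) ∧ C.HasWaveFlex ω := by
  intro ω hω
  classical
  obtain ⟨u, hflex, hne, hfin⟩ := hloc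
  have hω0 := RUMProof.onTorus_ne_zero hω
  constructor
  · obtain ⟨c, hc0, hc⟩ := RUMProof.key_lemma C hflex hne hfin hω
    refine ⟨c, hc0, funext fun e => ?_⟩
    rw [RUMProof.phi_mulVec C ω c e, hc e]
    rfl
  · obtain ⟨c, hc0, hc⟩ := RUMProof.key_lemma C hflex hne hfin (RUMProof.onTorus_conj hω)
    refine ⟨fun κ' => WithLp.toLp 2 (fun σ => c (κ', σ)), ?_, ?_⟩
    · intro e m
      have h := hc e
      simp only [RUMProof.rowSum] at h
      have hcc : (fun i => (starRingEnd ℂ) ((fun j => (starRingEnd ℂ) (ω j)) i)) = ω := by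
        funext i
        exact Complex.conj_conj (ω i)
      rw [hcc] at h
      have key : ∀ σ : Fin d, (C.edgeVec e σ : ℂ) *
          ((zpow ω (C.kvec e + m) • WithLp.toLp 2 (fun σ' => c (C.κ e, σ'))) σ -
           (zpow ω (C.lvec e + m) • WithLp.toLp 2 (fun σ' => c (C.τ e, σ'))) σ) =
          zpow ω m * ((C.edgeVec e σ : ℂ) *
            (zpow ω (C.kvec e) * c (C.κ e, σ) - zpow ω (C.lvec e) * c (C.τ e, σ))) := by
        intro σ
        have hs1 : (zpow ω (C.kvec e + m) •
            WithLp.toLp 2 (fun σ' => c (C.κ e, σ'))) σ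
            = zpow ω (C.kvec e + m) * c (C.κ e, σ) := rfl
        have hs2 : (zpow ω (C.lvec e + m) •
            WithLp.toLp 2 (fun σ' => c (C.τ e, σ'))) σ
            = zpow ω (C.lvec e + m) * c (C.τ e, σ) := rfl
        rw [hs1, hs2, RUMProof.zpow_add' hω0 (C.kvec e) m, RUMProof.zpow_add' hω0 (C.lvec e) m]
        ring
      rw [Finset.sum_congr rfl (fun σ _ => key σ), ← Finset.mul_sum, h, mul_zero]
    · intro h0
      apply hc0
      funext x
      obtain ⟨κ', σ⟩ := x
      have h1 := congrFun h0 (κ', (0 : Fin d → ℤ))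
      simp only [RUMProof.zpow_zero', one_smul] at h1
      exact congrArg (fun v : EuclideanSpace ℂ (Fin d) => v σ) h1
end

section
/- Let C be a crystal framework in ℝ^d and let ω' ∈ 𝕋^d. Then the following are equivalent (unit cell doubling): (i) there is a nonzero complex infinitesimal flex ũ : V × ℤ^d → ℂ^d of C satisfying ũ(κ, k + 2m) = (ω')^m ũ(κ, k) for all κ ∈ V, k, m ∈ ℤ^d (i.e. ũ is periodic-modulo-phase ω' with respect to the doubled translation group 2ℤ^d); (ii) there exists ω ∈ 𝕋^d with ω_i² = ω'_i for each i ∈ {1,…,d} such that C has a nonzero wave flex with phase ω. In other words, the RUM spectrum with respect to the doubled unit cell is the image of the RUM spectrum under the coordinatewise squaring map. -/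
open scoped BigOperators

namespace CFAux

private lemma scalar_key (w sg : ℂ) (hw : w ≠ 0) (hsg : sg * sg = 1) (M : ℤ) (rb db : Bool) :
    (if db then sg / w else 1) * ((sg * w) ^ (2:ℤ)) ^ (M + (if rb && db then (1:ℤ) else 0)) =
      (sg * w) ^ (2 * M + (if rb then (1:ℤ) else 0)) * (if xor rb db then sg / w else 1) := by
  have hsg0 : sg ≠ 0 := by intro h; rw [h] at hsg; simp at hsg
  have hsw : sg * w ≠ 0 := mul_ne_zero hsg0 hw
  have hX2 : ((sg * w)) ^ (2:ℤ) = w * w := by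
    rw [zpow_two]
    calc sg * w * (sg * w) = sg * sg * (w * w) := by ring
    _ = w * w := by rw [hsg, one_mul]
  have hX : ((w:ℂ) * w) ≠ 0 := mul_ne_zero hw hw
  have h2 : (sg * w) ^ (2 * M + (if rb then (1:ℤ) else 0))
      = (w * w) ^ M * (sg * w) ^ (if rb then (1:ℤ) else 0) := by
    rw [zpow_add₀ hsw, zpow_mul, hX2]
  rw [hX2, h2]
  cases rb <;> cases db <;> simp
  · ring
  · field_simp
    linear_combination (-1 : ℂ) * hsg
  · rw [zpow_add_one₀ hX]
    field_simp

private lemma key_eigen {d : ℕ} {V : Type}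
    (ω ω' : Fin d → ℂ) (hω : ∀ i, ω i ≠ 0) (hsq : ∀ i, ω i ^ 2 = ω' i)
    (ut : V × (Fin d → ℤ) → EuclideanSpace ℂ (Fin d))
    (hper : ∀ (κ₀ : V) (k m : Fin d → ℤ),
      ut (κ₀, k + 2 • m) = CrystalFramework.zpow ω' m • ut (κ₀, k))
    (ε : Fin d → Bool) (κ₀ : V) (k : Fin d → ℤ) :
    (∑ δ : Fin d → Bool, (∏ j, if δ j then (if ε j then (-1:ℂ) else 1) / ω j else 1) •
        ut (κ₀, k + fun j => if δ j then 1 else 0)) =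
      CrystalFramework.zpow (fun j => (if ε j then (-1:ℂ) else 1) * ω j) k •
        ∑ δ : Fin d → Bool, (∏ j, if δ j then (if ε j then (-1:ℂ) else 1) / ω j else 1) •
          ut (κ₀, (0 : Fin d → ℤ) + fun j => if δ j then 1 else 0) := by
  classical
  have hsg : ∀ j, (if ε j then (-1:ℂ) else 1) * (if ε j then (-1:ℂ) else 1) = 1 := by
    intro j; cases h : ε j <;> simp
  have hlam2 : ∀ j, ((if ε j then (-1:ℂ) else 1) * ω j) ^ (2:ℤ) = ω' j := by
    intro j
    rw [zpow_two]
    calc (if ε j then (-1:ℂ) else 1) * ω j * ((if ε j then (-1:ℂ) else 1) * ω j)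
        = ((if ε j then (-1:ℂ) else 1) * (if ε j then (-1:ℂ) else 1)) * (ω j * ω j) := by ring
      _ = ω' j := by rw [hsg j, one_mul, ← pow_two, hsq j]
  set r : Fin d → Bool := fun j => decide (k j % 2 = 1) with hrdef
  set m : Fin d → ℤ := fun j => k j / 2 with hmdef
  have hkj : ∀ j, k j = 2 * m j + (if r j then 1 else 0) := by
    intro j
    simp only [hrdef, hmdef]
    by_cases h : k j % 2 = 1 <;> simp [h] <;> omega
  have step1 : ∀ δ : Fin d → Bool,
      (k + fun j => if δ j then (1:ℤ) else 0) =
        ((fun j => if xor (r j) (δ j) then (1:ℤ) else 0) +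
          2 • (m + fun j => if r j && δ j then (1:ℤ) else 0)) := by
    intro δ; funext j
    have h := hkj j
    simp only [Pi.add_apply, Pi.smul_apply, Pi.mul_apply, Pi.ofNat_apply, smul_eq_mul,
      nsmul_eq_mul, Nat.cast_ofNat]
    cases hr : r j <;> cases hd : δ j <;> simp only [hr, hd] at h ⊢ <;>
      simp at h ⊢ <;> omega
  have hLHS : ∀ δ : Fin d → Bool,
      (∏ j, if δ j then (if ε j then (-1:ℂ) else 1) / ω j else 1) •
          ut (κ₀, k + fun j => if δ j then (1:ℤ) else 0)
        = ((∏ j, if δ j then (if ε j then (-1:ℂ) else 1) / ω j else 1) *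
            CrystalFramework.zpow ω' (m + fun j => if r j && δ j then (1:ℤ) else 0)) •
            ut (κ₀, fun j => if xor (r j) (δ j) then (1:ℤ) else 0) := by
    intro δ
    rw [step1 δ, hper, smul_smul]
  rw [Finset.sum_congr rfl fun δ _ => hLHS δ, Finset.smul_sum]
  simp only [smul_smul, zero_add]
  have hinv : Function.Involutive (fun δ : Fin d → Bool => fun j => xor (r j) (δ j)) := by
    intro δ; funext j
    simp [← Bool.xor_assoc]
  refine Fintype.sum_bijective _ hinv.bijective _ _ fun δ => ?_
  simp only []
  congr 1
  unfold CrystalFramework.zpow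
  rw [← Finset.prod_mul_distrib, ← Finset.prod_mul_distrib]
  refine Finset.prod_congr rfl fun j _ => ?_
  rw [Pi.add_apply]
  have h := scalar_key (ω j) (if ε j then (-1:ℂ) else 1) (hω j) (hsg j) (m j) (r j) (δ j)
  rw [hlam2 j] at h
  rw [show k j = 2 * m j + (if r j then (1:ℤ) else 0) from hkj j]
  simpa using h


private lemma isFlex_translate {d : ℕ} {V E : Type} [Fintype V] [Fintype E]
    {C : CrystalFramework d V E} {ut : V × (Fin d → ℤ) → EuclideanSpace ℂ (Fin d)}
    (h : C.IsFlex ut) (t : Fin d → ℤ) :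
    C.IsFlex (fun x => ut (x.1, x.2 + t)) := by
  intro e m
  simpa [add_assoc] using h e (m + t)

private lemma isFlex_sum {d : ℕ} {V E ι : Type} [Fintype V] [Fintype E] [Fintype ι]
    {C : CrystalFramework d V E} (c : ι → ℂ)
    (us : ι → V × (Fin d → ℤ) → EuclideanSpace ℂ (Fin d))
    (h : ∀ i, C.IsFlex (us i)) :
    C.IsFlex (fun x => ∑ i, c i • us i x) := by
  intro e m
  have expand : ∀ (x : V × (Fin d → ℤ)) (σ : Fin d),
      (∑ i, c i • us i x) σ = ∑ i, c i * us i x σ := by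
    intro x σ
    rw [WithLp.ofLp_sum, Finset.sum_apply]
    rfl
  simp only [expand]
  have key : ∀ σ : Fin d, (C.edgeVec e σ : ℂ) *
      ((∑ i, c i * us i (C.κ e, C.kvec e + m) σ) - ∑ i, c i * us i (C.τ e, C.lvec e + m) σ)
      = ∑ i, c i * ((C.edgeVec e σ : ℂ) *
          (us i (C.κ e, C.kvec e + m) σ - us i (C.τ e, C.lvec e + m) σ)) := by
    intro σ
    rw [← Finset.sum_sub_distrib, Finset.mul_sum]
    exact Finset.sum_congr rfl fun i _ => by ring
  simp only [key]
  rw [Finset.sum_comm]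
  refine Finset.sum_eq_zero fun i _ => ?_
  rw [← Finset.mul_sum, h i e m, mul_zero]

end CFAux

open CrystalFramework in
/-- unit cell doubling: a crystal framework has a nonzero infinitesimal flex
which is periodic-modulo-phase `ω'` for the doubled translation group `2ℤ^d` iff it has a
nonzero wave flex whose phase `ω` squares coordinatewise to `ω'`. -/
theorem doubled_cell_wave_flex_iff_square_root_phase
    {d : ℕ} {V E : Type} [Fintype V] [Fintype E]
    (hd : 0 < d) (C : CrystalFramework d V E)
    (ω' : Fin d → ℂ) (hω' : OnTorus ω') :
    (∃ ut : V × (Fin d → ℤ) → EuclideanSpace ℂ (Fin d),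
        C.IsFlex ut ∧ ut ≠ 0 ∧
        ∀ (κ₀ : V) (k m : Fin d → ℤ),
          ut (κ₀, k + 2 • m) = zpow ω' m • ut (κ₀, k)) ↔
      (∃ ω : Fin d → ℂ, OnTorus ω ∧ (∀ i, ω i ^ 2 = ω' i) ∧ C.HasWaveFlex ω) := by
  constructor
  · rintro ⟨ut, hflex, hne, hper⟩
    classical
    have hω'0 : ∀ i, ω' i ≠ 0 := by
      intro i h
      have h2 := hω' i
      rw [h] at h2; simp at h2
    choose ω hωsq using fun i => IsAlgClosed.exists_pow_nat_eq (ω' i) zero_lt_two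
    have hωabs : ∀ i, ‖ω i‖ = 1 := by
      intro i
      have h1 : ‖ω i‖ ^ 2 = 1 := by
        rw [← norm_pow, hωsq i, hω' i]
      have h2 : (‖ω i‖ - 1) * (‖ω i‖ + 1) = 0 := by ring_nf; linarith
      rcases mul_eq_zero.1 h2 with h | h
      · linarith
      · have h3 := norm_nonneg (ω i)
        linarith
    have hω0 : ∀ i, ω i ≠ 0 := by
      intro i h
      have h2 := hωabs i; rw [h] at h2; simp at h2
    obtain ⟨x₀, hx₀⟩ : ∃ x, ut x ≠ 0 := by
      by_contra h; push_neg at h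
      exact hne (funext fun x => h x)
    set coef : (Fin d → Bool) → (Fin d → Bool) → ℂ :=
      fun ε δ => ∏ j, if δ j then (if ε j then (-1:ℂ) else 1) / ω j else 1 with hcoefdef
    set Wf : (Fin d → Bool) → (V × (Fin d → ℤ)) → EuclideanSpace ℂ (Fin d) :=
      fun ε x => ∑ δ : Fin d → Bool, coef ε δ • ut (x.1, x.2 + fun j => if δ j then 1 else 0)
      with hWfdef
    have hzero : (fun _ : Fin d => (0:ℤ)) = (0 : Fin d → ℤ) := rfl
    have hsum : ∑ ε : Fin d → Bool, Wf ε x₀ = ((2:ℂ)^d) • ut x₀ := by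
      simp only [hWfdef]
      rw [Finset.sum_comm]
      have h1 : ∀ δ : Fin d → Bool,
          (∑ ε : Fin d → Bool, coef ε δ • ut (x₀.1, x₀.2 + fun j => if δ j then 1 else 0))
            = (∑ ε : Fin d → Bool, coef ε δ) •
                ut (x₀.1, x₀.2 + fun j => if δ j then 1 else 0) :=
        fun δ => (Finset.sum_smul).symm
      rw [Finset.sum_congr rfl fun δ _ => h1 δ]
      have h2 : ∀ δ : Fin d → Bool, (∑ ε : Fin d → Bool, coef ε δ)
          = ∏ j, (if δ j then (0:ℂ) else 2) := by
        intro δ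
        simp only [hcoefdef]
        have hl := Finset.sum_prod_piFinset (R := ℂ) Finset.univ
          (fun (j : Fin d) (b : Bool) => if δ j then (if b then (-1:ℂ) else 1) / ω j else 1)
        rw [Fintype.piFinset_univ] at hl
        refine Eq.trans (by rfl) (Eq.trans hl ?_)
        refine Finset.prod_congr rfl fun j _ => ?_
        rw [Fintype.sum_bool]
        by_cases h : δ j
        · simp only [h, if_true]
          simp [neg_div]
        · simp [h]; norm_num
      rw [Finset.sum_congr rfl fun δ _ => by rw [h2 δ]]
      rw [Finset.sum_eq_single_of_mem (fun _ => false) (Finset.mem_univ _) ?side]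
      · have e0 : (fun j : Fin d => if (false : Bool) then (1:ℤ) else 0) = (0 : Fin d → ℤ) := by
          funext j; simp
        rw [e0, add_zero]
        simp [Finset.prod_const]
      case side =>
        intro δ _ hδ
        obtain ⟨j, hj⟩ : ∃ j, δ j = true := by
          by_contra hc; push_neg at hc
          exact hδ (funext fun j => by simpa using hc j)
        rw [Finset.prod_eq_zero (Finset.mem_univ j) (by simp [hj]), zero_smul]
    have hex : ∃ ε, Wf ε ≠ 0 := by
      by_contra hc
      push_neg at hc
      apply hx₀
      have h0 : ∑ ε : Fin d → Bool, Wf ε x₀ = 0 := by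
        refine Finset.sum_eq_zero fun ε _ => ?_
        rw [hc ε]; rfl
      rw [hsum] at h0
      have h2d : ((2:ℂ)^d) ≠ 0 := by norm_num
      exact (smul_eq_zero.1 h0).resolve_left h2d
    obtain ⟨ε, hWne⟩ := hex
    refine ⟨fun j => (if ε j then (-1:ℂ) else 1) * ω j, ?_, ?_, ?_⟩
    · intro i
      rw [norm_mul]
      cases h : ε i <;> simp [h, hωabs i]
    · intro i
      cases h : ε i <;> simp [h, neg_mul, neg_sq, one_mul, hωsq i]
    · have hfun : (fun x : V × (Fin d → ℤ) =>
          zpow (fun j => (if ε j then (-1:ℂ) else 1) * ω j) x.2 •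
            (fun κ₀ => ∑ δ : Fin d → Bool, coef ε δ •
              ut (κ₀, (0 : Fin d → ℤ) + fun j => if δ j then 1 else 0)) x.1) = Wf ε := by
        funext x
        simp only [hWfdef, hcoefdef]
        exact (CFAux.key_eigen ω ω' hω0 (fun i => hωsq i) ut hper ε x.1 x.2).symm
      refine ⟨fun κ₀ => ∑ δ : Fin d → Bool, coef ε δ •
          ut (κ₀, (0 : Fin d → ℤ) + fun j => if δ j then 1 else 0), ?_, ?_⟩
      · rw [hfun, hWfdef]
        exact CFAux.isFlex_sum (coef ε)
          (fun δ => fun x => ut (x.1, x.2 + fun j => if δ j then 1 else 0))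
          (fun δ => CFAux.isFlex_translate hflex _)
      · rw [hfun]
        exact hWne
  · rintro ⟨ω, hωT, hsq, u, hflex, hne⟩
    have hω0 : ∀ i, ω i ≠ 0 := by
      intro i h
      have h2 := hωT i; rw [h] at h2; simp at h2
    refine ⟨fun x => zpow ω x.2 • u x.1, hflex, hne, ?_⟩
    intro κ₀ k m
    show zpow ω (k + 2 • m) • u κ₀ = zpow ω' m • (zpow ω k • u κ₀)
    rw [smul_smul]
    congr 1
    unfold CrystalFramework.zpow
    rw [← Finset.prod_mul_distrib]
    refine Finset.prod_congr rfl fun i _ => ?_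
    have h2i : (k + 2 • m) i = k i + 2 * m i := by
      simp only [Pi.add_apply, Pi.smul_apply, Pi.mul_apply, Pi.ofNat_apply, smul_eq_mul,
        nsmul_eq_mul, Nat.cast_ofNat]
    rw [h2i, zpow_add₀ (hω0 i), zpow_mul]
    have h2z : ω i ^ (2:ℤ) = ω' i := by
      rw [zpow_two, ← pow_two, hsq i]
    rw [h2z]
    ring
end

section
/- Every complex infinitesimal flex u of the kagome framework C_kag which vanishes at infinity, i.e. ‖u(κ,k)‖ → 0 as |k₁| + |k₂| → ∞, is identically zero. In particular C_kag has no nonzero square-summable infinitesimal flex. -/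
open scoped BigOperators

/-- Positions of the three motif vertices of the kagome framework. -/
noncomputable def kagP : Fin 3 → Fin 2 → ℝ :=
  ![![0, 0], ![1, 0], ![1 / 2, Real.sqrt 3 / 2]]

/-- The period vectors of the kagome framework. -/
noncomputable def kagA : Fin 2 → Fin 2 → ℝ :=
  ![![2, 0], ![1, Real.sqrt 3]]

/-- First endpoints (motif vertex labels) of the six motif edges. -/
def kagκ : Fin 6 → Fin 3 := ![0, 1, 2, 1, 2, 1]

/-- Second endpoints (motif vertex labels) of the six motif edges. -/
def kagτ : Fin 6 → Fin 3 := ![1, 2, 0, 0, 0, 2]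

/-- First endpoint translation multi-indices of the six motif edges. -/
def kagk : Fin 6 → Fin 2 → ℤ := fun _ => 0

/-- Second endpoint translation multi-indices of the six motif edges. -/
def kagl : Fin 6 → Fin 2 → ℤ :=
  ![![0, 0], ![0, 0], ![0, 0], ![1, 0], ![0, 1], ![1, -1]]

/-- The translation homomorphism `L : ℤ² → ℝ²` of the kagome framework. -/
noncomputable def kagL (k : Fin 2 → ℤ) : Fin 2 → ℝ :=
  fun i => (k 0 : ℝ) * kagA 0 i + (k 1 : ℝ) * kagA 1 i

/-- The framework vertices `q(κ, k) = p(κ) + L(k)` of the kagome framework. -/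
noncomputable def kagQ (κ₀ : Fin 3) (k : Fin 2 → ℤ) : Fin 2 → ℝ :=
  fun i => kagP κ₀ i + kagL k i

/-- The edge vectors of the six motif edges of the kagome framework. -/
noncomputable def kagV (e : Fin 6) : Fin 2 → ℝ :=
  fun i => kagQ (kagκ e) (kagk e) i - kagQ (kagτ e) (kagl e) i

/-- The symbol function `Φ` of the kagome framework (all six motif edges are
non-reflexive, i.e. `kagκ e ≠ kagτ e`). -/
noncomputable def kagPhi (z w : ℂ) : Matrix (Fin 6) (Fin 3 × Fin 2) ℂ := fun e col =>
  (if col.1 = kagκ e then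
    (kagV e col.2 : ℂ) *
      ((starRingEnd ℂ) z ^ kagk e 0 * (starRingEnd ℂ) w ^ kagk e 1) else 0) +
  (if col.1 = kagτ e then
    -(kagV e col.2 : ℂ) *
      ((starRingEnd ℂ) z ^ kagl e 0 * (starRingEnd ℂ) w ^ kagl e 1) else 0)

/-- A complex infinitesimal flex of the kagome framework. -/
def IsKagFlex (u : Fin 3 × (Fin 2 → ℤ) → EuclideanSpace ℂ (Fin 2)) : Prop :=
  ∀ (e : Fin 6) (m : Fin 2 → ℤ),
    ∑ σ, (kagV e σ : ℂ) *
      (u (kagκ e, kagk e + m) σ - u (kagτ e, kagl e + m) σ) = 0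
/- ============ auxiliary lemmas ============ -/

lemma kag_comp_le (v : EuclideanSpace ℂ (Fin 2)) (i : Fin 2) : ‖v i‖ ≤ ‖v‖ := by
  rw [EuclideanSpace.norm_eq]
  have h : ‖v i‖ ^ 2 ≤ ∑ j, ‖v j‖ ^ 2 :=
    Finset.single_le_sum (f := fun j => ‖v j‖ ^ 2) (fun j _ => by positivity)
      (Finset.mem_univ i)
  calc ‖v i‖ = Real.sqrt (‖v i‖ ^ 2) := (Real.sqrt_sq (norm_nonneg _)).symm
    _ ≤ _ := Real.sqrt_le_sqrt h

lemma kag_sqrt3_le_two : Real.sqrt 3 ≤ 2 := by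
  nlinarith [Real.sq_sqrt (show (0:ℝ) ≤ 3 by norm_num), Real.sqrt_nonneg 3]

lemma kag_vanish (F : (Fin 2 → ℤ) → ℂ) (d : Fin 2 → ℤ) (hd : 1 ≤ |d 0| + |d 1|)
    (hstep : ∀ m, F (d + m) = F m)
    (hdecay : ∀ ε > (0:ℝ), ∃ N : ℕ, ∀ m : Fin 2 → ℤ,
      (N : ℤ) ≤ |m 0| + |m 1| → ‖F m‖ < ε) :
    ∀ m, F m = 0 := by
  intro m
  have iter : ∀ n : ℕ, F ((n : ℤ) • d + m) = F m := by
    intro n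
    induction n with
    | zero => simp
    | succ n ih =>
      have he : ((n + 1 : ℕ) : ℤ) • d + m = d + ((n : ℤ) • d + m) := by
        push_cast; module
      rw [he, hstep, ih]
  by_contra h0
  have hp : 0 < ‖F m‖ := norm_pos_iff.mpr h0
  obtain ⟨N, hN⟩ := hdecay ‖F m‖ hp
  set n : ℕ := N + (|m 0| + |m 1|).toNat with hn
  set k : Fin 2 → ℤ := (n : ℤ) • d + m with hk
  have hk0 : k 0 = (n : ℤ) * d 0 + m 0 := by simp [hk, mul_comm]
  have hk1 : k 1 = (n : ℤ) * d 1 + m 1 := by simp [hk, mul_comm]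
  have hb0 : (n : ℤ) * |d 0| - |m 0| ≤ |k 0| := by
    have h1 : |(n : ℤ) * d 0| - |(-(m 0))| ≤ |(n : ℤ) * d 0 - (-(m 0))| :=
      abs_sub_abs_le_abs_sub _ _
    rw [abs_mul, abs_neg, sub_neg_eq_add, ← hk0] at h1
    simpa [abs_of_nonneg (Int.natCast_nonneg n)] using h1
  have hb1 : (n : ℤ) * |d 1| - |m 1| ≤ |k 1| := by
    have h1 : |(n : ℤ) * d 1| - |(-(m 1))| ≤ |(n : ℤ) * d 1 - (-(m 1))| :=
      abs_sub_abs_le_abs_sub _ _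
    rw [abs_mul, abs_neg, sub_neg_eq_add, ← hk1] at h1
    simpa [abs_of_nonneg (Int.natCast_nonneg n)] using h1
  have hnn : (|m 0| + |m 1| : ℤ) ≤ ((|m 0| + |m 1|).toNat : ℤ) := Int.self_le_toNat _
  have hNle : (N : ℤ) ≤ |k 0| + |k 1| := by
    have hmul : (n : ℤ) * 1 ≤ (n : ℤ) * (|d 0| + |d 1|) :=
      mul_le_mul_of_nonneg_left hd (Int.natCast_nonneg n)
    have hncast : (n : ℤ) = (N : ℤ) + ((|m 0| + |m 1|).toNat : ℤ) := by
      simp [hn]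
    nlinarith [hb0, hb1, hmul, hnn]
  have := hN k hNle
  rw [hk, iter n] at this
  exact lt_irrefl _ this

lemma kag_decay_combo (u : Fin 3 × (Fin 2 → ℤ) → EuclideanSpace ℂ (Fin 2))
    (hdec : ∀ ε > (0:ℝ), ∃ N : ℕ, ∀ (κ₀ : Fin 3) (k : Fin 2 → ℤ),
      (N : ℤ) ≤ |k 0| + |k 1| → ‖u (κ₀, k)‖ < ε)
    (κ : Fin 3) (a b : ℂ) (ha : ‖a‖ ≤ 2) (hb : ‖b‖ ≤ 2) :
    ∀ ε > (0:ℝ), ∃ N : ℕ, ∀ m : Fin 2 → ℤ, (N : ℤ) ≤ |m 0| + |m 1| →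
      ‖a * u (κ, m) 0 + b * u (κ, m) 1‖ < ε := by
  intro ε hε
  obtain ⟨N, hN⟩ := hdec (ε / 5) (by positivity)
  refine ⟨N, fun m hm => ?_⟩
  have h := hN κ m hm
  have h0 : ‖u (κ, m) 0‖ ≤ ‖u (κ, m)‖ := kag_comp_le _ _
  have h1 : ‖u (κ, m) 1‖ ≤ ‖u (κ, m)‖ := kag_comp_le _ _
  calc ‖a * u (κ, m) 0 + b * u (κ, m) 1‖
      ≤ ‖a * u (κ, m) 0‖ + ‖b * u (κ, m) 1‖ := norm_add_le _ _
    _ = ‖a‖ * ‖u (κ, m) 0‖ + ‖b‖ * ‖u (κ, m) 1‖ := by rw [norm_mul, norm_mul]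
    _ ≤ 2 * ‖u (κ, m)‖ + 2 * ‖u (κ, m)‖ := by
        nlinarith [norm_nonneg a, norm_nonneg b, norm_nonneg (u (κ, m) 0),
          norm_nonneg (u (κ, m) 1), norm_nonneg (u (κ, m))]
    _ < 2 * (ε / 5) + 2 * (ε / 5) := by gcongr
    _ < ε := by linarith
lemma kagκ5 : kagκ 5 = 1 := rfl
lemma kagτ5 : kagτ 5 = 2 := rfl
lemma kagl5 : kagl 5 = ![1, -1] := rfl

lemma kagV00 : kagV 0 0 = -1 := by
  simp [kagV, kagQ, kagP, kagL, kagA, kagκ, kagτ, kagk, kagl]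
lemma kagV01 : kagV 0 1 = 0 := by
  simp [kagV, kagQ, kagP, kagL, kagA, kagκ, kagτ, kagk, kagl]
lemma kagV10 : kagV 1 0 = 1 / 2 := by
  (simp [kagV, kagQ, kagP, kagL, kagA, kagκ, kagτ, kagk, kagl]) <;> ring
lemma kagV11 : kagV 1 1 = -(Real.sqrt 3 / 2) := by
  (simp [kagV, kagQ, kagP, kagL, kagA, kagκ, kagτ, kagk, kagl]) <;> ring
lemma kagV20 : kagV 2 0 = 1 / 2 := by
  (simp [kagV, kagQ, kagP, kagL, kagA, kagκ, kagτ, kagk, kagl]) <;> ring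
lemma kagV21 : kagV 2 1 = Real.sqrt 3 / 2 := by
  (simp [kagV, kagQ, kagP, kagL, kagA, kagκ, kagτ, kagk, kagl]) <;> ring
lemma kagV30 : kagV 3 0 = -1 := by
  (simp [kagV, kagQ, kagP, kagL, kagA, kagκ, kagτ, kagk, kagl]) <;> ring
lemma kagV31 : kagV 3 1 = 0 := by
  (simp [kagV, kagQ, kagP, kagL, kagA, kagκ, kagτ, kagk, kagl]) <;> ring
lemma kagV40 : kagV 4 0 = -(1 / 2) := by
  (simp [kagV, kagQ, kagP, kagL, kagA, kagκ, kagτ, kagk, kagl]) <;> ring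
lemma kagV41 : kagV 4 1 = -(Real.sqrt 3 / 2) := by
  (simp [kagV, kagQ, kagP, kagL, kagA, kagκ, kagτ, kagk, kagl]) <;> ring
lemma kagV50 : kagV 5 0 = -(1 / 2) := by
  (simp [kagV, kagQ, kagP, kagL, kagA, kagκ5, kagτ5, kagk, kagl5]) <;> ring
lemma kagV51 : kagV 5 1 = Real.sqrt 3 / 2 := by
  (simp [kagV, kagQ, kagP, kagL, kagA, kagκ5, kagτ5, kagk, kagl5]) <;> ring

lemma kagk_add (e : Fin 6) (m : Fin 2 → ℤ) : kagk e + m = m := by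
  funext i; simp [kagk]
lemma kagl0_add (m : Fin 2 → ℤ) : kagl 0 + m = m := by
  funext i; fin_cases i <;> simp [kagl]
lemma kagl1_add (m : Fin 2 → ℤ) : kagl 1 + m = m := by
  funext i; fin_cases i <;> simp [kagl]
lemma kagl2_add (m : Fin 2 → ℤ) : kagl 2 + m = m := by
  funext i; fin_cases i <;> simp [kagl]
section Eqs
variable {u : Fin 3 × (Fin 2 → ℤ) → EuclideanSpace ℂ (Fin 2)} (hu : IsKagFlex u)
include hu

lemma kagE1 (m : Fin 2 → ℤ) : u (0, m) 0 = u (1, m) 0 := by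
  have h := hu 0 m
  simp only [Fin.sum_univ_two, kagV00, kagV01, kagk_add, kagl0_add,
    show kagκ 0 = 0 from rfl, show kagτ 0 = 1 from rfl] at h
  push_cast at h
  linear_combination -h

lemma kagE2 (m : Fin 2 → ℤ) :
    u (1, m) 0 - (Real.sqrt 3 : ℂ) * u (1, m) 1
      = u (2, m) 0 - (Real.sqrt 3 : ℂ) * u (2, m) 1 := by
  have h := hu 1 m
  simp only [Fin.sum_univ_two, kagV10, kagV11, kagk_add, kagl1_add,
    show kagκ 1 = 1 from rfl, show kagτ 1 = 2 from rfl] at h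
  push_cast at h
  linear_combination 2 * h

lemma kagE3 (m : Fin 2 → ℤ) :
    u (2, m) 0 + (Real.sqrt 3 : ℂ) * u (2, m) 1
      = u (0, m) 0 + (Real.sqrt 3 : ℂ) * u (0, m) 1 := by
  have h := hu 2 m
  simp only [Fin.sum_univ_two, kagV20, kagV21, kagk_add, kagl2_add,
    show kagκ 2 = 2 from rfl, show kagτ 2 = 0 from rfl] at h
  push_cast at h
  linear_combination 2 * h

lemma kagE4 (m : Fin 2 → ℤ) : u (1, m) 0 = u (0, kagl 3 + m) 0 := by
  have h := hu 3 m
  simp only [Fin.sum_univ_two, kagV30, kagV31, kagk_add,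
    show kagκ 3 = 1 from rfl, show kagτ 3 = 0 from rfl] at h
  push_cast at h
  linear_combination -h

lemma kagE5 (m : Fin 2 → ℤ) :
    u (2, m) 0 + (Real.sqrt 3 : ℂ) * u (2, m) 1
      = u (0, kagl 4 + m) 0 + (Real.sqrt 3 : ℂ) * u (0, kagl 4 + m) 1 := by
  have h := hu 4 m
  simp only [Fin.sum_univ_two, kagV40, kagV41, kagk_add,
    show kagκ 4 = 2 from rfl, show kagτ 4 = 0 from rfl] at h
  push_cast at h
  linear_combination -2 * h

lemma kagE6 (m : Fin 2 → ℤ) :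
    u (1, m) 0 - (Real.sqrt 3 : ℂ) * u (1, m) 1
      = u (2, kagl 5 + m) 0 - (Real.sqrt 3 : ℂ) * u (2, kagl 5 + m) 1 := by
  have h := hu 5 m
  simp only [Fin.sum_univ_two, kagV50, kagV51, kagk_add, kagκ5, kagτ5] at h
  push_cast at h
  linear_combination -2 * h

end Eqs
lemma kag_main (u : Fin 3 × (Fin 2 → ℤ) → EuclideanSpace ℂ (Fin 2))
    (hu : IsKagFlex u)
    (hdec : ∀ ε > (0:ℝ), ∃ N : ℕ, ∀ (κ₀ : Fin 3) (k : Fin 2 → ℤ),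
      (N : ℤ) ≤ |k 0| + |k 1| → ‖u (κ₀, k)‖ < ε) : u = 0 := by
  have hs3 : (0:ℝ) < Real.sqrt 3 := Real.sqrt_pos.mpr (by norm_num)
  have hc : (Real.sqrt 3 : ℂ) ≠ 0 := by
    simpa using ne_of_gt hs3
  have hcn : ‖(Real.sqrt 3 : ℂ)‖ ≤ 2 := by
    rw [Complex.norm_real, Real.norm_eq_abs, abs_of_pos hs3]
    exact kag_sqrt3_le_two
  have hone : ‖(1 : ℂ)‖ ≤ 2 := by norm_num
  -- x-component at vertex 0 vanishes (horizontal lines)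
  have hx0 : ∀ m, (1:ℂ) * u (0, m) 0 + 0 * u (0, m) 1 = 0 := by
    apply kag_vanish _ (kagl 3)
    · norm_num [kagl]; decide
    · intro m
      simp only [one_mul, zero_mul, add_zero]
      exact (kagE4 hu m).symm.trans (kagE1 hu m).symm
    · exact kag_decay_combo u hdec 0 1 0 hone (by norm_num)
  have hx0' : ∀ m, u (0, m) 0 = 0 := fun m => by
    have := hx0 m; simpa using this
  have hx1' : ∀ m, u (1, m) 0 = 0 := fun m => (kagE1 hu m).symm.trans (hx0' m)
  -- (x + √3 y)-combination at vertex 0 vanishes (60° lines)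
  have hG0 : ∀ m, (1:ℂ) * u (0, m) 0 + (Real.sqrt 3 : ℂ) * u (0, m) 1 = 0 := by
    apply kag_vanish _ (kagl 4)
    · norm_num [kagl]; decide
    · intro m
      simp only [one_mul]
      exact (kagE5 hu m).symm.trans (kagE3 hu m)
    · exact kag_decay_combo u hdec 0 1 _ hone hcn
  have hy0' : ∀ m, u (0, m) 1 = 0 := by
    intro m
    have h := hG0 m
    rw [one_mul, hx0' m, zero_add] at h
    exact (mul_eq_zero.mp h).resolve_left hc
  -- (x - √3 y)-combination at vertex 1 vanishes (−60° lines)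
  have hH1 : ∀ m, (1:ℂ) * u (1, m) 0 + (-(Real.sqrt 3 : ℂ)) * u (1, m) 1 = 0 := by
    apply kag_vanish _ (kagl 5)
    · norm_num [kagl5]
    · intro m
      have h1 := kagE2 hu (kagl 5 + m)
      have h2 := kagE6 hu m
      rw [← h2] at h1
      linear_combination h1
    · refine kag_decay_combo u hdec 1 1 _ hone ?_
      rwa [norm_neg]
  have hy1' : ∀ m, u (1, m) 1 = 0 := by
    intro m
    have h := hH1 m
    rw [one_mul, hx1' m, zero_add, neg_mul] at h
    have := neg_eq_zero.mp h
    exact (mul_eq_zero.mp this).resolve_left hc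
  -- vertex 2
  have hG2 : ∀ m, u (2, m) 0 + (Real.sqrt 3 : ℂ) * u (2, m) 1 = 0 := by
    intro m
    rw [kagE3 hu m, hx0' m, hy0' m]
    ring
  have hH2 : ∀ m, u (2, m) 0 - (Real.sqrt 3 : ℂ) * u (2, m) 1 = 0 := by
    intro m
    rw [← kagE2 hu m, hx1' m, hy1' m]
    ring
  have hx2' : ∀ m, u (2, m) 0 = 0 := by
    intro m
    have h1 := hG2 m; have h2 := hH2 m
    have : (2:ℂ) * u (2, m) 0 = 0 := by linear_combination h1 + h2
    exact (mul_eq_zero.mp this).resolve_left two_ne_zero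
  have hy2' : ∀ m, u (2, m) 1 = 0 := by
    intro m
    have h1 := hG2 m; have h2 := hH2 m
    have h3 : (2:ℂ) * ((Real.sqrt 3 : ℂ) * u (2, m) 1) = 0 := by
      linear_combination h1 - h2
    have h4 : (Real.sqrt 3 : ℂ) * u (2, m) 1 = 0 :=
      (mul_eq_zero.mp h3).resolve_left two_ne_zero
    exact (mul_eq_zero.mp h4).resolve_left hc
  -- conclude
  funext p
  obtain ⟨κ, m⟩ := p
  apply PiLp.ext
  intro i
  fin_cases κ <;> fin_cases i <;>
    simp [hx0', hy0', hx1', hy1', hx2', hy2']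
/-- every infinitesimal flex of the kagome framework which vanishes at
infinity is identically zero; in particular there is no nonzero square-summable
infinitesimal flex. -/
theorem kagome_no_decaying_flex :
    (∀ u : Fin 3 × (Fin 2 → ℤ) → EuclideanSpace ℂ (Fin 2),
      IsKagFlex u →
      (∀ ε > (0 : ℝ), ∃ N : ℕ, ∀ (κ₀ : Fin 3) (k : Fin 2 → ℤ),
        (N : ℤ) ≤ |k 0| + |k 1| → ‖u (κ₀, k)‖ < ε) →
      u = 0) ∧
    (∀ u : Fin 3 × (Fin 2 → ℤ) → EuclideanSpace ℂ (Fin 2),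
      IsKagFlex u → Summable (fun x => ‖u x‖ ^ 2) → u = 0) := by
  refine ⟨kag_main, fun u hu hsum => kag_main u hu ?_⟩
  intro ε hε
  have h0 := hsum.tendsto_cofinite_zero
  have hev : ∀ᶠ x in Filter.cofinite, ‖u x‖ ^ 2 < ε ^ 2 :=
    h0.eventually (Filter.Tendsto.eventually_lt_const (by positivity) Filter.tendsto_id)
  have hfin : {x : Fin 3 × (Fin 2 → ℤ) | ¬ ‖u x‖ ^ 2 < ε ^ 2}.Finite := by
    simpa [Filter.eventually_cofinite] using hev
  obtain ⟨N, hN⟩ := (hfin.image (fun x => (|x.2 0| + |x.2 1|).toNat)).bddAbove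
  refine ⟨N + 1, fun κ₀ k hk => ?_⟩
  by_contra hlt
  push_neg at hlt
  have hmem : (κ₀, k) ∈ {x : Fin 3 × (Fin 2 → ℤ) | ¬ ‖u x‖ ^ 2 < ε ^ 2} := by
    simp only [Set.mem_setOf_eq, not_lt]
    exact pow_le_pow_left₀ hε.le hlt 2
  have hle : (|k 0| + |k 1|).toNat ≤ N :=
    hN ⟨(κ₀, k), hmem, rfl⟩
  have habs : (0:ℤ) ≤ |k 0| + |k 1| := by positivity
  have hcast : ((|k 0| + |k 1|).toNat : ℤ) = |k 0| + |k 1| := Int.toNat_of_nonneg habs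
  have : ((N:ℤ) + 1) ≤ ((|k 0| + |k 1|).toNat : ℤ) := by
    rw [hcast]; exact_mod_cast hk
  omega
end
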